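/- arXiv:2603.29011 — 5 statements merged into one kernel-verified Lean document; each statement's English description precedes it below -/
import Mathlib

section
/- Let m ∈ ℕ. Any ℓ∞-product of m ℝ-trees has Nagata dimension ≤ m with constant ≤ γ, where γ < ∞ depends only on m (i.e. there is a single constant γ = γ(m) that works simultaneously for all ℓ∞-products of m ℝ-trees). -/
open Metric Set
open scoped Classical ENNReal NNReal

noncomputable section

/-- The underlying set of the lamplighter space over `X`: a lamp configuration
(a finite set of lit lamps) together with the position of the lamplighter. -/
abbrev Lamp (X : Type*) := Finset X × X

namespace Lamplighter

variable {X Y Z : Type*}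

/-- The length of the path visiting the points of a list in order,
with respect to the distance function `d`. -/
def pathLength (d : X → X → ℝ) : List X → ℝ
  | [] => 0
  | [_] => 0
  | x :: y :: l => d x y + pathLength d (y :: l)

/-- The symmetric difference of the lamp configurations of `p` and `q`, as a set. -/
def sd (p q : Lamp X) : Set X :=
  ((p.1 : Set X) \ (q.1 : Set X)) ∪ ((q.1 : Set X) \ (p.1 : Set X))

/-- The traveling salesman semimetric on the lamplighter space:
the infimum of lengths of finite paths starting at `p.2`, ending at `q.2`, and
visiting every point of the symmetric difference of the configurations. -/
def TSP (d : X → X → ℝ) (p q : Lamp X) : ℝ :=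
  sInf { s : ℝ | ∃ l : List X, l.head? = some p.2 ∧ l.getLast? = some q.2 ∧
    (∀ a ∈ sd p q, a ∈ l) ∧ s = pathLength d l }

/-- The diameter (in `ℝ≥0∞`) of a set with respect to a distance function `d`. -/
def ediamD (d : X → X → ℝ) (A : Set X) : ℝ≥0∞ :=
  ⨆ x ∈ A, ⨆ y ∈ A, ENNReal.ofReal (d x y)

/-- The traveling salesman shortcut semimetric:
`TSCP((A,x),(B,y)) = diam({x,y} ∪ (A Δ B))`. -/
def TSCP (d : X → X → ℝ) (p q : Lamp X) : ℝ :=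
  (ediamD d ({p.2, q.2} ∪ sd p q)).toReal

/-- `ρ((A,x),(B,y))` is `0` if `A = B` and `1` otherwise. -/
def rho (p q : Lamp X) : ℝ := if p.1 = q.1 then 0 else 1

/-- The lamplighter metric `d_La = TSP + ρ`. -/
def dLa (d : X → X → ℝ) (p q : Lamp X) : ℝ := TSP d p q + rho p q

/-- `X` is `K`-TSP-efficient if `TSP ≤ K • TSCP` on `La(X)²`. -/
def TSPEfficient (d : X → X → ℝ) (K : ℝ) : Prop :=
  ∀ p q : Lamp X, TSP d p q ≤ K * TSCP d p q

/-- A weak `C`-biLipschitz embedding between spaces with distance functions `dY`, `dZ`: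
a family of maps `φ t : Y → Z` (for `t > 0`) such that each `φ t` is `σ t`-Lipschitz
and `dY x y ≥ C*t` implies `dZ (φ t x) (φ t y) ≥ t * σ t`. -/
def WeakBiLip (dY : Y → Y → ℝ) (dZ : Z → Z → ℝ) (C : ℝ) : Prop :=
  ∃ φ : ℝ → Y → Z, ∀ t : ℝ, 0 < t → ∃ σ : ℝ, 0 < σ ∧
    (∀ x y : Y, dZ (φ t x) (φ t y) ≤ σ * dY x y) ∧
    (∀ x y : Y, C * t ≤ dY x y → t * σ ≤ dZ (φ t x) (φ t y))

/-- `f` is a `C`-biLipschitz embedding (an injective map of biLipschitz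
distortion at most `C`, allowing an overall scaling factor `s`). -/
def BiLipWith (dY : Y → Y → ℝ) (dZ : Z → Z → ℝ) (C : ℝ) (f : Y → Z) : Prop :=
  Function.Injective f ∧ ∃ s : ℝ, 0 < s ∧
    ∀ x y : Y, s * dY x y ≤ dZ (f x) (f y) ∧ dZ (f x) (f y) ≤ C * s * dY x y

/-- Nagata dimension at most `n` with constant at most `γ`: for every scale `s > 0`
there is a covering by sets of diameter at most `γ s` such that every set of diameter
less than `s` meets at most `n + 1` members of the covering. -/
def NagataDimD (d : Y → Y → ℝ) (n : ℕ) (γ : ℝ) : Prop :=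
  ∀ s : ℝ, 0 < s → ∃ B : Set (Set Y),
    (∀ y : Y, ∃ b ∈ B, y ∈ b) ∧
    (∀ b ∈ B, ediamD d b ≤ ENNReal.ofReal (γ * s)) ∧
    (∀ A : Set Y, ediamD d A < ENNReal.ofReal s →
      {b | b ∈ B ∧ (b ∩ A).Nonempty}.encard ≤ ((n : ℕ∞) + 1))

/-- Markov type 2 with constant `M`, for the distance function `d`: for every stationary
reversible Markov chain on a finite state space (given by a stationary distribution `μ`
and a reversible stochastic transition matrix `P`), every map `f` into the space, and
every time `t`, `E[d(f(Z_t),f(Z_0))²] ≤ M² t E[d(f(Z_1),f(Z_0))²]`. -/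
def HasMarkovType2 (d : Y → Y → ℝ) (M : ℝ) : Prop :=
  ∀ (n : ℕ) (μ : Fin n → ℝ) (P : Matrix (Fin n) (Fin n) ℝ),
    (∀ i, 0 ≤ μ i) → (∑ i, μ i) = 1 →
    (∀ i j, 0 ≤ P i j) → (∀ i, (∑ j, P i j) = 1) →
    (∀ i j, μ i * P i j = μ j * P j i) →
    ∀ (f : Fin n → Y) (t : ℕ),
      (∑ i, ∑ j, μ i * (P ^ t) i j * d (f i) (f j) ^ 2) ≤
        M ^ 2 * t * ∑ i, ∑ j, μ i * P i j * d (f i) (f j) ^ 2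

/-- `D`-doubling: every ball of radius `r` can be covered by `D` balls of radius `r/2`. -/
def Doubling (d : Y → Y → ℝ) (D : ℕ) : Prop :=
  ∀ r : ℝ, 0 < r → ∀ x : Y, ∃ c : Fin D → Y,
    ∀ y : Y, d x y ≤ r → ∃ i, d (c i) y ≤ r / 2

/-- `A` is an arc from `x` to `y`: the image of an injective continuous map of `[0,1]`
sending the endpoints to `x` and `y`. -/
def IsArc {T : Type*} [MetricSpace T] (x y : T) (A : Set T) : Prop :=
  ∃ γ : ℝ → T, ContinuousOn γ (Icc 0 1) ∧ InjOn γ (Icc 0 1) ∧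
    γ 0 = x ∧ γ 1 = y ∧ γ '' (Icc 0 1) = A

/-- `A` is a geodesic segment from `x` to `y`: the image of an isometric embedding
of `[0, dist x y]` sending the endpoints to `x` and `y`. -/
def IsGeodesicSeg {T : Type*} [MetricSpace T] (x y : T) (A : Set T) : Prop :=
  ∃ γ : ℝ → T, γ 0 = x ∧ γ (dist x y) = y ∧
    (∀ s ∈ Icc (0 : ℝ) (dist x y), ∀ t ∈ Icc (0 : ℝ) (dist x y),
      dist (γ s) (γ t) = |s - t|) ∧
    γ '' (Icc 0 (dist x y)) = A

/-- `T` is an ℝ-tree: any two (distinct) points are joined by a unique arc,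
and this arc is a geodesic. -/
def IsRTree (T : Type*) [MetricSpace T] : Prop :=
  ∀ x y : T, x ≠ y →
    (∃ A : Set T, IsArc x y A) ∧
    (∀ A A' : Set T, IsArc x y A → IsArc x y A' → A = A') ∧
    (∀ A : Set T, IsArc x y A → IsGeodesicSeg x y A)

/-- The sup (ℓ∞-product) distance on a finite product of metric spaces. -/
def piSupDist {n : ℕ} {T : Fin n → Type*} (I : ∀ i, MetricSpace (T i)) :
    (∀ i, T i) → (∀ i, T i) → ℝ :=
  letI := I
  fun f g => dist f g

/-- The ℓ1-product distance on a finite product of metric spaces. -/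
def piL1Dist {n : ℕ} {T : Fin n → Type*} (I : ∀ i, MetricSpace (T i)) :
    (∀ i, T i) → (∀ i, T i) → ℝ :=
  letI := I
  fun f g => ∑ i, dist (f i) (g i)

/-- The ℓ1 distance on `ℝ^m`. -/
def l1Dist (m : ℕ) (x y : Fin m → ℝ) : ℝ := ∑ i, |x i - y i|

/-- The ℓp distance on `ℝ^m`. -/
def lpDist (m : ℕ) (p : ℝ) (x y : Fin m → ℝ) : ℝ :=
  (∑ i, |x i - y i| ^ p) ^ (1 / p)

/-- The (pseudo)distance of the ℝ-star over the index type `ι`: the wedge sum of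
copies of `[0,∞)` indexed by `ι`, glued at `0`. -/
def starDist {ι : Type*} (p q : ι × ℝ≥0) : ℝ :=
  if p.1 = q.1 then |(p.2 : ℝ) - (q.2 : ℝ)| else (p.2 : ℝ) + (q.2 : ℝ)

/-- The sup (ℓ∞-product) of finitely many distance functions. -/
def supD {n : ℕ} {T : Fin n → Type*} (d : ∀ i, T i → T i → ℝ) (f g : ∀ i, T i) : ℝ :=
  ((Finset.univ.sup fun i => (d i (f i) (g i)).toNNReal : ℝ≥0) : ℝ)

/-- The infimum of distortions of biLipschitz embeddings of `(Y, dY)` into `(Z, dZ)`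
(`∞` if there is no such embedding). -/
def cEmb (dY : Y → Y → ℝ) (dZ : Z → Z → ℝ) : ℝ≥0∞ :=
  sInf { D : ℝ≥0∞ | ∃ C : ℝ, 0 < C ∧ D = ENNReal.ofReal C ∧
    ∃ f : Y → Z, BiLipWith dY dZ C f }

/-- `c_1^{m,dom}(X,d)`: the infimum of all `D > 0` such that there exist injective
`1`-Lipschitz maps `φ i : X → ℝ` and weights `α i ≥ 0` summing to `1` with
`∑ i, α i * |φ i x - φ i y| ≥ d x y / D` for all `x y` (`∞` if there is none). -/
def c1dom (d : X → X → ℝ) (m : ℕ) : ℝ≥0∞ :=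
  sInf { D : ℝ≥0∞ | ∃ C : ℝ, 0 < C ∧ D = ENNReal.ofReal C ∧
    ∃ (φ : Fin m → X → ℝ) (α : Fin m → ℝ),
      (∀ i, Function.Injective (φ i)) ∧
      (∀ i, ∀ x y : X, |φ i x - φ i y| ≤ d x y) ∧
      (∀ i, 0 ≤ α i) ∧ (∑ i, α i) = 1 ∧
      ∀ x y : X, d x y / C ≤ ∑ i, α i * |φ i x - φ i y| }

/-- The Hamming distance on the Hamming cube `{0,1}^M`, as a real number. -/
def hamDist {M : ℕ} (x y : Fin M → Bool) : ℝ :=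
  ((Finset.univ.filter fun i => x i ≠ y i).card : ℝ)

/-- The star graph `St_{n,k}`: the one-point coalescence of `n` paths of length `k`,
realized inside `ℤ^n` as the multiples `α eᵢ` with `0 ≤ α ≤ k`. -/
def St (n k : ℕ) : Type :=
  {x : Fin n → ℤ // ∃ i : Fin n, (∀ j : Fin n, j ≠ i → x j = 0) ∧ 0 ≤ x i ∧ x i ≤ (k : ℤ)}

/-- The ℓ1 metric on the star graph `St_{n,k}`. -/
def stDist {n k : ℕ} (x y : St n k) : ℝ := ∑ j, |(x.1 j : ℝ) - (y.1 j : ℝ)|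

/-- The endpoint `k eᵢ` of the `i`-th branch of the star graph. -/
def St.endpoint {n k : ℕ} (i : Fin n) : St n k :=
  ⟨fun j => if j = i then (k : ℤ) else 0, i, fun j hj => if_neg hj, by simp, by simp⟩

/-- The cycle metric on `ℤ/nℤ`. -/
def cycDist {n : ℕ} (a b : ZMod n) : ℝ := ((min ((a - b).val) ((b - a).val) : ℕ) : ℝ)

/-- The rectangular grid `G_{k,n} = ([0,k] ∩ ℤ) × ([0,n] ∩ ℤ)`. -/
def Grid2 (k n : ℕ) : Type :=
  {p : ℤ × ℤ // 0 ≤ p.1 ∧ p.1 ≤ (k : ℤ) ∧ 0 ≤ p.2 ∧ p.2 ≤ (n : ℤ)}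

/-- The ℓ1 metric on the grid `G_{k,n}`. -/
def grid2Dist {k n : ℕ} (x y : Grid2 k n) : ℝ :=
  |(x.1.1 : ℝ) - (y.1.1 : ℝ)| + |(x.1.2 : ℝ) - (y.1.2 : ℝ)|

/-- The `m`-dimensional grid `G^m({n_i}) = ∏ i, ([0, n_i] ∩ ℤ)`. -/
def GridM (m : ℕ) (n : Fin m → ℕ) : Type :=
  {p : Fin m → ℤ // ∀ i, 0 ≤ p i ∧ p i ≤ (n i : ℤ)}

/-- The ℓ1 metric on the `m`-dimensional grid. -/
def gridMDist {m : ℕ} {n : Fin m → ℕ} (x y : GridM m n) : ℝ :=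
  ∑ i, |(x.1 i : ℝ) - (y.1 i : ℝ)|

/-!
ℝ-trees are `0`-hyperbolic: the Gromov products `(x|y)_r` satisfy the ultrametric inequality
`min ((x|y)_r, (y|z)_r) ≤ (x|z)_r`. Fix a base point `r` of the product. In each coordinate, cut
the distance to `r i` into bands of width `m s` separated by gaps of width `s`; there are `m + 1`
shifted families of such bands, and by pigeonhole every point has all its `m` coordinates in bands
of one family. Within a product of bands, points are grouped by branching off from each other
above the bottom level minus `s`. These pieces have diameter at most `2 (m + 1) s`, and a set of
diameter less than `s` meets at most one piece of each family.
-/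

lemma ediamD_le_ofReal {Y : Type*} {d : Y → Y → ℝ} {A : Set Y} {c : ℝ}
    (h : ∀ x ∈ A, ∀ y ∈ A, d x y ≤ c) : ediamD d A ≤ ENNReal.ofReal c :=
  iSup₂_le fun x hx => iSup₂_le fun y hy => ENNReal.ofReal_le_ofReal (h x hx y hy)

lemma lt_of_ediamD_lt {Y : Type*} {d : Y → Y → ℝ} {A : Set Y} {s : ℝ}
    (h : ediamD d A < ENNReal.ofReal s) {x y : Y} (hx : x ∈ A) (hy : y ∈ A) : d x y < s :=
  (ENNReal.ofReal_lt_ofReal_iff'.1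
    ((le_iSup₂_of_le x hx
      (le_iSup₂ (f := fun y (_ : y ∈ A) => ENNReal.ofReal (d x y)) y hy)).trans_lt h)).1

lemma encard_le_card_of_subsingleton {ι X : Type*} [Fintype ι] (B : ι → Set (Set X))
    (A : Set X) (hB : ∀ j, {b | b ∈ B j ∧ (b ∩ A).Nonempty}.Subsingleton) :
    {b | b ∈ ⋃ j, B j ∧ (b ∩ A).Nonempty}.encard ≤ Fintype.card ι := by
  have hunion : {b | b ∈ ⋃ j, B j ∧ (b ∩ A).Nonempty} =
      ⋃ j, {b | b ∈ B j ∧ (b ∩ A).Nonempty} := by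
    ext b
    simp only [mem_iUnion, mem_ofPred_eq, exists_and_right]
  calc {b | b ∈ ⋃ j, B j ∧ (b ∩ A).Nonempty}.encard
      ≤ ∑ j, {b | b ∈ B j ∧ (b ∩ A).Nonempty}.encard :=
        hunion ▸ encard_iUnion_le_of_fintype _
    _ ≤ ∑ _j : ι, 1 := Finset.sum_le_sum fun j _ => encard_le_one_iff_subsingleton.2 (hB j)
    _ = Fintype.card ι := by simp

lemma exists_shift_avoiding_gaps (m : ℕ) (u : Fin m → ℤ) :
    ∃ j : Fin (m + 1), ∀ i, ∃ k : ℤ,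
      (m + 1) * k + j ≤ u i ∧ u i < (m + 1) * k + j + m := by
  have hq : (0 : ℤ) < m + 1 := by positivity
  -- `u i` falls into a gap of shift `j` exactly when `u i + 1 ≡ j`, so some shift is never hit
  let g : Fin m → Fin (m + 1) := fun i => ⟨((u i + 1) % (m + 1)).toNat, by
    have := Int.emod_lt_of_pos (u i + 1) hq
    have := Int.emod_nonneg (u i + 1) hq.ne'
    omega⟩
  have hcard : (Finset.univ.image g).card < (Finset.univ : Finset (Fin (m + 1))).card :=
    Finset.card_image_le.trans_lt (by simp)
  obtain ⟨j, -, hj⟩ := Finset.exists_mem_notMem_of_card_lt_card hcard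
  refine ⟨j, fun i => ⟨(u i - j) / (m + 1), ?_⟩⟩
  have hdiv := Int.mul_ediv_add_emod (u i - j) (m + 1)
  have h0 := Int.emod_nonneg (u i - j) hq.ne'
  have hlt := Int.emod_lt_of_pos (u i - j) hq
  have hne : (u i - j) % (m + 1) ≠ m := by
    intro h
    refine hj (Finset.mem_image.2 ⟨i, Finset.mem_univ _, Fin.ext ?_⟩)
    have : u i + 1 = j + (m + 1) * ((u i - j) / (m + 1) + 1) := by linarith
    simp only [g, this, Int.add_mul_emod_self_left]
    rw [Int.emod_eq_of_lt (by positivity) (by omega)]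
    simp
  constructor <;> omega

section JoinPath

variable {T : Type*}

def joinPath (α β : ℝ → T) (a u : ℝ) : T := if u ≤ a then α (a - u) else β (u - a)

variable {α β : ℝ → T} {a u : ℝ}

lemma joinPath_of_le (hu : u ≤ a) : joinPath α β a u = α (a - u) := if_pos hu

lemma joinPath_of_ge (h0 : α 0 = β 0) (hu : a ≤ u) : joinPath α β a u = β (u - a) := by
  rcases hu.eq_or_lt with rfl | hu
  · simp [joinPath, h0]
  · exact if_neg hu.not_ge

end JoinPath

section RTree

variable {T : Type*} [MetricSpace T]

def gromovProduct (r x y : T) : ℝ := (dist r x + dist r y - dist x y) / 2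

lemma gromovProduct_comm (r x y : T) : gromovProduct r x y = gromovProduct r y x := by
  simp only [gromovProduct, dist_comm x y, add_comm (dist r x)]

lemma gromovProduct_self (r x : T) : gromovProduct r x x = dist r x := by
  simp only [gromovProduct, dist_self]
  ring

lemma gromovProduct_nonneg (r x y : T) : 0 ≤ gromovProduct r x y := by
  unfold gromovProduct
  linarith [dist_triangle x r y, dist_comm x r]

lemma gromovProduct_le_dist_right (r x y : T) : gromovProduct r x y ≤ dist r y := by
  unfold gromovProduct
  linarith [dist_triangle r y x, dist_comm x y]

lemma dist_eq_sub_gromovProduct (r x y : T) :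
    dist x y = dist r x + dist r y - 2 * gromovProduct r x y := by
  unfold gromovProduct
  ring

def IsZeroHyperbolic (X : Type*) [MetricSpace X] : Prop :=
  ∀ r x y z : X, min (gromovProduct r x y) (gromovProduct r y z) ≤ gromovProduct r x z

lemma IsZeroHyperbolic.lt_gromovProduct_trans (hT : IsZeroHyperbolic T) {r x y z : T} {t : ℝ}
    (hxy : t < gromovProduct r x y) (hyz : t < gromovProduct r y z) :
    t < gromovProduct r x z :=
  (lt_min hxy hyz).trans_le (hT r x y z)

def IsGeodesic (γ : ℝ → T) (ℓ : ℝ) : Prop :=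
  ∀ s ∈ Icc 0 ℓ, ∀ t ∈ Icc 0 ℓ, dist (γ s) (γ t) = |s - t|

namespace IsGeodesic

variable {γ α β : ℝ → T} {ℓ a b s t : ℝ}

lemma dist_apply_zero (hγ : IsGeodesic γ ℓ) (ht : t ∈ Icc 0 ℓ) :
    dist (γ 0) (γ t) = t := by
  rw [hγ 0 ⟨le_rfl, ht.1.trans ht.2⟩ t ht, zero_sub, abs_neg, abs_of_nonneg ht.1]

lemma continuousOn (hγ : IsGeodesic γ ℓ) : ContinuousOn γ (Icc 0 ℓ) :=
  (LipschitzOnWith.of_dist_le_mul (K := 1) fun s hs t ht => by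
    rw [hγ s hs t ht, NNReal.coe_one, one_mul, Real.dist_eq]).continuousOn

lemma shift (hγ : IsGeodesic γ ℓ) {c : ℝ} (hc : 0 ≤ c) :
    IsGeodesic (fun t => γ (c + t)) (ℓ - c) := by
  intro s hs t ht
  rw [hγ _ ⟨by linarith [hs.1], by linarith [hs.2]⟩ _
    ⟨by linarith [ht.1], by linarith [ht.2]⟩]
  ring_nf

lemma eq_of_apply_eq (hα : IsGeodesic α a) (hβ : IsGeodesic β b) (h0 : α 0 = β 0)
    (hs : s ∈ Icc 0 a) (ht : t ∈ Icc 0 b) (h : α s = β t) : s = t := by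
  rw [← hα.dist_apply_zero hs, ← hβ.dist_apply_zero ht, h0, h]

lemma exists_isGreatest_eq (hα : IsGeodesic α a) (hβ : IsGeodesic β b) (ha : 0 ≤ a)
    (hb : 0 ≤ b) (h0 : α 0 = β 0) :
    ∃ c, IsGreatest {t ∈ Icc 0 (min a b) | α t = β t} c := by
  have hsub : Icc 0 (min a b) ⊆ Icc 0 a := Icc_subset_Icc_right (min_le_left a b)
  have hsub' : Icc 0 (min a b) ⊆ Icc 0 b := Icc_subset_Icc_right (min_le_right a b)
  have hclosed : IsClosed (Icc 0 (min a b) ∩ (fun t => (α t, β t)) ⁻¹' diagonal T) :=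
    ((hα.continuousOn.mono hsub).prodMk
      (hβ.continuousOn.mono hsub')).preimage_isClosed_of_isClosed isClosed_Icc isClosed_diagonal
  exact (isCompact_Icc.of_isClosed_subset hclosed inter_subset_left).exists_isGreatest
    ⟨0, ⟨le_rfl, le_min ha hb⟩, h0⟩

end IsGeodesic

section Concatenation

variable {α β : ℝ → T} {a b u v : ℝ}

lemma dist_joinPath_of_le (hα : IsGeodesic α a) (hu : u ∈ Icc 0 a) (hv : v ∈ Icc 0 a) :
    dist (joinPath α β a u) (joinPath α β a v) = |u - v| := by
  rw [joinPath_of_le hu.2, joinPath_of_le hv.2,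
    hα _ ⟨by linarith [hu.2], by linarith [hu.1]⟩ _
      ⟨by linarith [hv.2], by linarith [hv.1]⟩,
    abs_sub_comm]
  ring_nf

lemma dist_joinPath_of_ge (hβ : IsGeodesic β b) (h0 : α 0 = β 0) (hu : u ∈ Icc a (a + b))
    (hv : v ∈ Icc a (a + b)) :
    dist (joinPath α β a u) (joinPath α β a v) = |u - v| := by
  rw [joinPath_of_ge h0 hu.1, joinPath_of_ge h0 hv.1,
    hβ _ ⟨by linarith [hu.1], by linarith [hu.2]⟩ _
      ⟨by linarith [hv.1], by linarith [hv.2]⟩]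
  ring_nf

lemma lipschitzOnWith_joinPath (hα : IsGeodesic α a) (hβ : IsGeodesic β b) (h0 : α 0 = β 0) :
    LipschitzOnWith 1 (joinPath α β a) (Icc 0 (a + b)) := by
  refine LipschitzOnWith.of_dist_le_mul fun u hu v hv => ?_
  rw [NNReal.coe_one, one_mul, Real.dist_eq]
  wlog huv : u ≤ v generalizing u v
  · rw [dist_comm, abs_sub_comm]
    exact this v hv u hu (le_of_not_ge huv)
  by_cases hva : v ≤ a
  · exact (dist_joinPath_of_le hα ⟨hu.1, huv.trans hva⟩ ⟨hv.1, hva⟩).le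
  by_cases hua : a ≤ u
  · exact (dist_joinPath_of_ge hβ h0 ⟨hua, hu.2⟩ ⟨hua.trans huv, hv.2⟩).le
  rw [not_le] at hva hua
  have ha : 0 ≤ a := hu.1.trans hua.le
  calc dist (joinPath α β a u) (joinPath α β a v)
      ≤ dist (joinPath α β a u) (joinPath α β a a) +
          dist (joinPath α β a a) (joinPath α β a v) :=
        dist_triangle _ _ _
    _ = |u - a| + |a - v| := by
        rw [dist_joinPath_of_le hα ⟨hu.1, hua.le⟩ ⟨ha, le_rfl⟩,
          dist_joinPath_of_ge hβ h0 ⟨le_rfl, by linarith [hv.2]⟩ ⟨hva.le, hv.2⟩]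
    _ = |u - v| := by
        rw [abs_of_neg (by linarith), abs_of_neg (by linarith), abs_of_neg (by linarith)]
        ring

lemma injOn_joinPath (hα : IsGeodesic α a) (hβ : IsGeodesic β b) (h0 : α 0 = β 0)
    (hmeet : ∀ s ∈ Icc 0 a, ∀ t ∈ Icc 0 b, α s = β t → s = 0) :
    InjOn (joinPath α β a) (Icc 0 (a + b)) := by
  intro u hu v hv huv
  wlog hle : u ≤ v generalizing u v
  · exact (this hv hu huv.symm (le_of_not_ge hle)).symm
  have of_dist_eq (h : dist (joinPath α β a u) (joinPath α β a v) = |u - v|) : u = v := by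
    rwa [huv, dist_self, eq_comm, abs_eq_zero, sub_eq_zero] at h
  by_cases hva : v ≤ a
  · exact of_dist_eq (dist_joinPath_of_le hα ⟨hu.1, hle.trans hva⟩ ⟨hv.1, hva⟩)
  by_cases hua : a ≤ u
  · exact of_dist_eq (dist_joinPath_of_ge hβ h0 ⟨hua, hu.2⟩ ⟨hua.trans hle, hv.2⟩)
  rw [not_le] at hva hua
  rw [joinPath_of_le hua.le, joinPath_of_ge h0 hva.le] at huv
  have := hmeet (a - u) ⟨by linarith, by linarith [hu.1]⟩ (v - a)
    ⟨by linarith, by linarith [hv.2]⟩ huv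
  linarith

end Concatenation

lemma isArc_image_Icc {η : ℝ → T} {L : ℝ} (hc : ContinuousOn η (Icc 0 L))
    (hi : InjOn η (Icc 0 L)) (hL : 0 < L) : IsArc (η 0) (η L) (η '' Icc 0 L) := by
  have hmaps : MapsTo (L * ·) (Icc 0 1) (Icc 0 L) := fun t ht =>
    ⟨mul_nonneg hL.le ht.1, mul_le_of_le_one_right hL.le ht.2⟩
  refine ⟨fun t => η (L * t), hc.comp (by fun_prop) hmaps,
    hi.comp (mul_right_injective₀ hL.ne').injOn hmaps, by simp, by simp, ?_⟩
  rw [← image_image η (L * ·), image_mul_left_Icc hL.le zero_le_one, mul_zero, mul_one]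

namespace IsRTree

lemma exists_isGeodesic (hT : IsRTree T) (x y : T) :
    ∃ γ : ℝ → T, γ 0 = x ∧ γ (dist x y) = y ∧ IsGeodesic γ (dist x y) := by
  rcases eq_or_ne x y with rfl | hxy
  · refine ⟨fun _ => x, rfl, rfl, fun s hs t ht => ?_⟩
    rw [dist_self, Icc_self, mem_singleton_iff] at hs ht
    simp [hs, ht]
  · obtain ⟨⟨A, hA⟩, -, hgeo⟩ := hT x y hxy
    obtain ⟨γ, h0, h1, hγ, -⟩ := hgeo A hA
    exact ⟨γ, h0, h1, hγ⟩

lemma dist_add_dist_of_mem_arc (hT : IsRTree T) {x y p : T} {A : Set T} (hA : IsArc x y A)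
    (hp : p ∈ A) : dist x p + dist p y = dist x y := by
  have hxy : x ≠ y := by
    obtain ⟨γ, -, hinj, h0, h1, -⟩ := hA
    intro hxy
    exact zero_ne_one (hinj (left_mem_Icc.2 zero_le_one) (right_mem_Icc.2 zero_le_one)
      (h0.trans (hxy.trans h1.symm)))
  obtain ⟨ψ, hψ0, hψ1, hψ, rfl⟩ := (hT x y hxy).2.2 A hA
  obtain ⟨w, hw, rfl⟩ := hp
  have hd : dist x y ∈ Icc 0 (dist x y) := ⟨dist_nonneg, le_rfl⟩
  calc dist x (ψ w) + dist (ψ w) y = dist (ψ 0) (ψ w) + dist (ψ w) (ψ (dist x y)) := by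
        rw [hψ0, hψ1]
    _ = dist x y := by
        rw [hψ 0 ⟨le_rfl, hw.1.trans hw.2⟩ w hw, hψ w hw _ hd,
          abs_of_nonpos (by linarith [hw.1]),
          abs_of_nonpos (by linarith [hw.2])]
        ring

theorem dist_eq_add (hT : IsRTree T) {α β : ℝ → T} {a b : ℝ} (hα : IsGeodesic α a)
    (hβ : IsGeodesic β b) (ha : 0 ≤ a) (hb : 0 ≤ b) (h0 : α 0 = β 0)
    (hmeet : ∀ s ∈ Icc 0 a, ∀ t ∈ Icc 0 b, α s = β t → s = 0) :
    dist (α a) (β b) = a + b := by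
  rcases (add_nonneg ha hb).eq_or_lt with hab | hab
  · obtain ⟨rfl, rfl⟩ : a = 0 ∧ b = 0 := ⟨by linarith, by linarith⟩
    simp [h0]
  have harc := isArc_image_Icc (lipschitzOnWith_joinPath hα hβ h0).continuousOn
    (injOn_joinPath hα hβ h0 hmeet) hab
  have hsplit := hT.dist_add_dist_of_mem_arc harc
    (mem_image_of_mem _ ⟨ha, le_add_of_nonneg_right hb⟩)
  rw [joinPath_of_le ha, joinPath_of_le le_rfl, joinPath_of_ge h0 (le_add_of_nonneg_right hb),
    sub_zero, sub_self, add_sub_cancel_left] at hsplit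
  rw [← hsplit, dist_comm (α a), hα.dist_apply_zero ⟨ha, le_rfl⟩, h0,
    hβ.dist_apply_zero ⟨hb, le_rfl⟩]

lemma dist_apply_gromovProduct (hT : IsRTree T) {r y : T} {γ : ℝ → T}
    (hγ : IsGeodesic γ (dist r y)) (h0 : γ 0 = r) (h1 : γ (dist r y) = y) (x : T) :
    dist x (γ (gromovProduct r x y)) = dist r x - gromovProduct r x y := by
  obtain ⟨δ, hδ0, hδ1, hδ⟩ := hT.exists_isGeodesic r x
  obtain ⟨c, ⟨hc, hδc⟩, hcmax⟩ :=
    hδ.exists_isGreatest_eq hγ dist_nonneg dist_nonneg (hδ0.trans h0.symm)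
  have hcx : c ≤ dist r x := hc.2.trans (min_le_left _ _)
  have hcy : c ≤ dist r y := hc.2.trans (min_le_right _ _)
  have hmeet : ∀ s ∈ Icc 0 (dist r x - c), ∀ t ∈ Icc 0 (dist r y - c),
      δ (c + s) = γ (c + t) → s = 0 := by
    intro s hs t ht hst
    have hs' : c + s ∈ Icc 0 (dist r x) := ⟨by linarith [hc.1, hs.1], by linarith [hs.2]⟩
    have ht' : c + t ∈ Icc 0 (dist r y) := ⟨by linarith [hc.1, ht.1], by linarith [ht.2]⟩
    have hst' := hδ.eq_of_apply_eq hγ (hδ0.trans h0.symm) hs' ht' hst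
    have : c + s ≤ c := hcmax ⟨⟨hs'.1, le_min hs'.2 (hst' ▸ ht'.2)⟩, hst' ▸ hst⟩
    linarith [hs.1]
  have hxy : dist x y = (dist r x - c) + (dist r y - c) := by
    have := hT.dist_eq_add (hδ.shift hc.1) (hγ.shift hc.1) (sub_nonneg.2 hcx) (sub_nonneg.2 hcy)
      (by simpa using hδc) hmeet
    simpa [hδ1, h1] using this
  have hgp : gromovProduct r x y = c := by
    unfold gromovProduct
    rw [hxy]
    ring
  rw [hgp, ← hδc]
  nth_rewrite 1 [← hδ1]
  rw [hδ _ ⟨dist_nonneg, le_rfl⟩ c ⟨hc.1, hcx⟩, abs_of_nonneg (sub_nonneg.2 hcx)]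

theorem isZeroHyperbolic (hT : IsRTree T) : IsZeroHyperbolic T := by
  intro r x y z
  obtain ⟨γ, h0, h1, hγ⟩ := hT.exists_isGeodesic r y
  have hx := hT.dist_apply_gromovProduct hγ h0 h1 x
  have hz := hT.dist_apply_gromovProduct hγ h0 h1 z
  rw [gromovProduct_comm r y z]
  set t₁ := gromovProduct r x y
  set t₂ := gromovProduct r z y
  have hγt : dist (γ t₁) (γ t₂) = |t₁ - t₂| :=
    hγ _ ⟨gromovProduct_nonneg r x y, gromovProduct_le_dist_right r x y⟩
      _ ⟨gromovProduct_nonneg r z y, gromovProduct_le_dist_right r z y⟩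
  have hxz : dist x z ≤ dist x (γ t₁) + dist (γ t₁) (γ t₂) + dist z (γ t₂) :=
    dist_comm z (γ t₂) ▸ dist_triangle4 x (γ t₁) (γ t₂) z
  rw [hx, hz, hγt, dist_eq_sub_gromovProduct r x z] at hxz
  rcases le_total t₁ t₂ with h | h
  · rw [abs_of_nonpos (sub_nonpos.2 h)] at hxz
    exact min_le_of_left_le (by linarith)
  · rw [abs_of_nonneg (sub_nonneg.2 h)] at hxz
    exact min_le_of_right_le (by linarith)

end IsRTree

end RTree

section Pieces

def bandStart (m : ℕ) (s : ℝ) (j : Fin (m + 1)) (k : ℤ) : ℝ := ((m + 1) * k + (j : ℕ)) * s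

variable {m : ℕ} {s : ℝ} {j : Fin (m + 1)}

lemma bandStart_add_one (k : ℤ) : bandStart m s j (k + 1) = bandStart m s j k + (m + 1) * s := by
  unfold bandStart
  push_cast
  ring

lemma bandStart_mono (hs : 0 ≤ s) : Monotone (bandStart m s j) := fun k k' hk => by
  unfold bandStart
  gcongr

lemma le_of_mem_band (hs : 0 < s) {k k' : ℤ} {x y : ℝ} (hx : bandStart m s j k ≤ x)
    (hy : y < bandStart m s j k' + m * s) (hxy : x < y + s) : k ≤ k' := by
  by_contra! hk
  have := bandStart_mono (j := j) hs.le (Int.add_one_le_iff.2 hk)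
  rw [bandStart_add_one] at this
  linarith

lemma eq_of_mem_band (hs : 0 < s) {k k' : ℤ} {x y : ℝ} (hx : bandStart m s j k ≤ x)
    (hx' : x < bandStart m s j k + m * s) (hy : bandStart m s j k' ≤ y)
    (hy' : y < bandStart m s j k' + m * s) (hxy : |x - y| < s) : k = k' :=
  le_antisymm (le_of_mem_band hs hx hy' (by linarith [le_abs_self (x - y)]))
    (le_of_mem_band hs hy hx' (by linarith [neg_abs_le (x - y)]))

variable {T : Fin m → Type*} [∀ i, MetricSpace (T i)]

def piece (r : ∀ i, T i) (s : ℝ) (j : Fin (m + 1)) (k : Fin m → ℤ) (x : ∀ i, T i) :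
    Set (∀ i, T i) :=
  {y | ∀ i, bandStart m s j (k i) ≤ dist (r i) (y i) ∧
    dist (r i) (y i) < bandStart m s j (k i) + m * s ∧
    bandStart m s j (k i) - s < gromovProduct (r i) (x i) (y i)}

variable (r : ∀ i, T i)

lemma exists_mem_piece (hs : 0 < s) (x : ∀ i, T i) : ∃ j k, x ∈ piece r s j k x := by
  obtain ⟨j, hj⟩ := exists_shift_avoiding_gaps m fun i => ⌊dist (r i) (x i) / s⌋
  choose k hk using hj
  refine ⟨j, k, fun i => ?_⟩
  have hfloor := Int.floor_le (dist (r i) (x i) / s)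
  have hfloor' := Int.lt_floor_add_one (dist (r i) (x i) / s)
  rw [le_div_iff₀ hs] at hfloor
  rw [div_lt_iff₀ hs] at hfloor'
  have hk1 : ((m + 1) * k i + (j : ℕ) : ℝ) ≤ ⌊dist (r i) (x i) / s⌋ := by
    exact_mod_cast (hk i).1
  have hk2 : (⌊dist (r i) (x i) / s⌋ : ℝ) + 1 ≤ (m + 1) * k i + (j : ℕ) + m := by
    exact_mod_cast (hk i).2
  rw [gromovProduct_self]
  unfold bandStart
  refine ⟨by nlinarith, by nlinarith, by nlinarith⟩

variable {r}

lemma dist_le_of_mem_piece (hT : ∀ i, IsZeroHyperbolic (T i)) (hs : 0 ≤ s) {k : Fin m → ℤ}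
    {x y y' : ∀ i, T i} (hy : y ∈ piece r s j k x) (hy' : y' ∈ piece r s j k x) :
    dist y y' ≤ 2 * (m + 1) * s := by
  refine (dist_pi_le_iff (by positivity)).2 fun i => ?_
  obtain ⟨h1, h2, h3⟩ := hy i
  obtain ⟨h1', h2', h3'⟩ := hy' i
  have := (hT i).lt_gromovProduct_trans (gromovProduct_comm (r i) (x i) (y i) ▸ h3) h3'
  rw [dist_eq_sub_gromovProduct (r i)]
  linarith

lemma piece_eq_of_dist_lt (hT : ∀ i, IsZeroHyperbolic (T i)) (hs : 0 < s) {k k' : Fin m → ℤ}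
    {x x' y y' : ∀ i, T i}
    (hy : y ∈ piece r s j k x) (hy' : y' ∈ piece r s j k' x') (hyy' : dist y y' < s) :
    piece r s j k x = piece r s j k' x' := by
  have hd i : dist (y i) (y' i) < s := (dist_le_pi_dist y y' i).trans_lt hyy'
  obtain rfl : k = k' := funext fun i => eq_of_mem_band hs (hy i).1 (hy i).2.1 (hy' i).1
    (hy' i).2.1 (by
      rw [dist_comm (r i), dist_comm (r i)]
      exact (abs_dist_sub_le _ _ _).trans_lt (hd i))
  have hx i : bandStart m s j (k i) - s < gromovProduct (r i) (x i) (x' i) := by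
    have hyy' : bandStart m s j (k i) - s < gromovProduct (r i) (y i) (y' i) := by
      linarith [dist_eq_sub_gromovProduct (r i) (y i) (y' i), hd i, (hy i).1, (hy' i).1]
    exact (hT i).lt_gromovProduct_trans ((hT i).lt_gromovProduct_trans (hy i).2.2 hyy')
      (gromovProduct_comm (r i) (x' i) (y' i) ▸ (hy' i).2.2)
  ext z
  refine forall_congr' fun i => and_congr_right' (and_congr_right' ⟨fun h => ?_, fun h => ?_⟩)
  · exact (hT i).lt_gromovProduct_trans (gromovProduct_comm (r i) (x i) (x' i) ▸ hx i) h
  · exact (hT i).lt_gromovProduct_trans (hx i) h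

end Pieces

theorem nagataDimD_pi_of_isZeroHyperbolic {m : ℕ} {T : Fin m → Type*}
    [∀ i, MetricSpace (T i)] (hT : ∀ i, IsZeroHyperbolic (T i)) :
    NagataDimD (fun x y : ∀ i, T i => dist x y) m (2 * (m + 1)) := by
  intro s hs
  rcases isEmpty_or_nonempty (∀ i, T i) with hX | ⟨⟨r⟩⟩
  · exact ⟨∅, isEmptyElim, by simp, by simp⟩
  refine ⟨⋃ j, range fun p : (Fin m → ℤ) × (∀ i, T i) => piece r s j p.1 p.2,
    fun x => ?_, fun b hb => ?_, fun A hA => ?_⟩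
  · obtain ⟨j, k, hx⟩ := exists_mem_piece r hs x
    exact ⟨_, mem_iUnion.2 ⟨j, (k, x), rfl⟩, hx⟩
  · obtain ⟨j, ⟨k, x⟩, rfl⟩ := mem_iUnion.1 hb
    exact ediamD_le_ofReal fun y hy y' hy' => (dist_le_of_mem_piece hT hs.le hy hy').trans_eq
      (by ring)
  · calc _ ≤ (Fintype.card (Fin (m + 1)) : ℕ∞) :=
          encard_le_card_of_subsingleton _ _ fun j => ?_
      _ = m + 1 := by simp
    rintro _ ⟨⟨⟨k, x⟩, rfl⟩, y, hy, hyA⟩ _ ⟨⟨⟨k', x'⟩, rfl⟩, y', hy', hy'A⟩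
    exact piece_eq_of_dist_lt hT hs hy hy' (lt_of_ediamD_lt hA hyA hy'A)

/-- For every `m` there is a constant `γ = γ(m)` such that every
ℓ∞-product of `m` ℝ-trees has Nagata dimension `≤ m` with constant `≤ γ`. -/
theorem statement3 (m : ℕ) :
    ∃ γ : ℝ, ∀ (T : Fin m → Type u) (I : ∀ i, MetricSpace (T i)),
      (∀ i, @IsRTree (T i) (I i)) →
      NagataDimD (piSupDist I) m γ :=
  ⟨2 * (m + 1), fun _ _ hT =>
    nagataDimD_pi_of_isZeroHyperbolic fun i => (hT i).isZeroHyperbolic⟩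

end Lamplighter
end
end

section
/- Let K < ∞ and let (X,d) be a K-TSP-efficient metric space. Then X is D-doubling with D ≤ 4K+1. -/
open Metric Set
open scoped Classical ENNReal NNReal

noncomputable section

namespace Lamplighter

variable {X Y Z : Type*}

/-!
A maximal `r/2`-separated subset `F` of the ball `B(x, r)` is an `r/2`-net of the ball, so it
suffices to bound `#F`. A tour from `x` back to `x` that switches off all lamps of `F` passes
through `#F` points pairwise more than `r/2` apart, so `TSP((F,x),(∅,x)) ≥ (r/2)(#F - 1)`,
while `TSCP((F,x),(∅,x)) = diam({x} ∪ F) ≤ 2r`. Efficiency gives `(r/2)(#F - 1) ≤ 2Kr`.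
-/

section PathLength

variable {X : Type*} [PseudoMetricSpace X]

theorem pathLength_le_cons (a : X) : ∀ l : List X,
    pathLength dist l ≤ pathLength dist (a :: l)
  | [] => le_rfl
  | _ :: _ => le_add_of_nonneg_left dist_nonneg

theorem pathLength_cons_le_cons_cons (a b : X) : ∀ l : List X,
    pathLength dist (a :: l) ≤ pathLength dist (a :: b :: l)
  | [] => by simp [pathLength, dist_nonneg]
  | c :: l => by
    simp only [pathLength]
    linarith [dist_triangle a b c]

theorem pathLength_cons_le_of_sublist {l₁ l₂ : List X} (h : l₁.Sublist l₂) (a : X) :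
    pathLength dist (a :: l₁) ≤ pathLength dist (a :: l₂) := by
  induction h generalizing a with
  | slnil => exact le_rfl
  | cons b _ ih => exact (ih a).trans (pathLength_cons_le_cons_cons a b _)
  | cons_cons b _ ih => exact add_le_add_right (ih b) _

theorem pathLength_le_of_sublist {l₁ l₂ : List X} (h : l₁.Sublist l₂) :
    pathLength dist l₁ ≤ pathLength dist l₂ := by
  induction h with
  | slnil => exact le_rfl
  | cons b _ ih => exact ih.trans (pathLength_le_cons b _)
  | cons_cons b h _ => exact pathLength_cons_le_of_sublist h b

theorem mul_length_sub_one_le_pathLength {s : ℝ} (hs : 0 ≤ s) :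
    ∀ l : List X, l.Pairwise (fun a b => s ≤ dist a b) →
      s * (l.length - 1) ≤ pathLength dist l
  | [] => by simp [pathLength, hs]
  | [_] => by simp [pathLength]
  | a :: b :: l => by
    intro h
    have hab : s ≤ dist a b := List.rel_of_pairwise_cons h (List.mem_cons_self ..)
    have ih := mul_length_sub_one_le_pathLength hs (b :: l) (List.pairwise_cons.mp h).2
    simp only [pathLength, List.length_cons, Nat.cast_add, Nat.cast_one] at ih ⊢
    linarith

theorem mul_card_sub_one_le_pathLength {s : ℝ} (hs : 0 ≤ s) {F : Finset X}
    (hF : (F : Set X).Pairwise (fun a b => s ≤ dist a b)) {l : List X}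
    (hl : ∀ a ∈ F, a ∈ l) : s * (F.card - 1) ≤ pathLength dist l := by
  set l' := (l.filter (· ∈ F)).dedup
  have hmem : ∀ a, a ∈ l' ↔ a ∈ F := fun a => by
    simp only [l', List.mem_dedup, List.mem_filter, decide_eq_true_eq]
    exact ⟨And.right, fun ha => ⟨hl a ha, ha⟩⟩
  have hlen : l'.length = F.card := by
    rw [← List.toFinset_card_of_nodup (List.nodup_dedup _)]
    congr 1
    ext a
    rw [List.mem_toFinset]
    exact hmem a
  have hsep : l'.Pairwise (fun a b => s ≤ dist a b) :=
    (List.nodup_dedup _).pairwise_of_forall_ne fun a ha b hb hab =>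
      hF ((hmem a).mp ha) ((hmem b).mp hb) hab
  calc s * (F.card - 1) = s * (l'.length - 1) := by rw [hlen]
    _ ≤ pathLength dist l' := mul_length_sub_one_le_pathLength hs l' hsep
    _ ≤ pathLength dist l :=
      pathLength_le_of_sublist ((List.dedup_sublist _).trans List.filter_sublist)

end PathLength

section TravelingSalesman

variable {X : Type*} [PseudoMetricSpace X]

theorem mul_card_sub_one_le_TSP {s : ℝ} (hs : 0 ≤ s) (p q : Lamp X) {F : Finset X}
    (hFsd : (F : Set X) ⊆ sd p q) (hF : (F : Set X).Pairwise (fun a b => s ≤ dist a b)) :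
    s * (F.card - 1) ≤ TSP dist p q := by
  refine le_csInf ?_ ?_
  · refine ⟨_, (p.2 :: (p.1 ∪ q.1).toList) ++ [q.2], rfl, List.getLast?_concat, ?_, rfl⟩
    rintro a (ha | ha) <;> simp_all [sd]
  · rintro _ ⟨l, -, -, hl, rfl⟩
    exact mul_card_sub_one_le_pathLength hs hF fun a ha => hl a (hFsd ha)

theorem TSCP_eq_diam (p q : Lamp X) :
    TSCP dist p q = diam ({p.2, q.2} ∪ sd p q) := by
  simp only [TSCP, diam, ediamD, ediam, edist_dist]

end TravelingSalesman

section Doubling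

variable {X : Type*} [PseudoMetricSpace X]

theorem packingNumber_le_of_forall_finset {ε : ℝ≥0} {A : Set X} {N : ℕ}
    (h : ∀ F : Finset X, (F : Set X) ⊆ A → IsSeparated ε (F : Set X) → F.card ≤ N) :
    packingNumber ε A ≤ N := by
  refine iSup₂_le fun C hCA => iSup_le fun hC => ?_
  by_contra! hlt
  obtain ⟨t, htC, ht⟩ := exists_subset_encard_eq (Order.add_one_le_of_lt hlt)
  have htfin : t.Finite := finite_of_encard_eq_coe ht
  have := h htfin.toFinset (by simpa using htC.trans hCA) (by simpa using hC.subset htC)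
  rw [← Nat.cast_le (α := ℕ∞), ← encard_coe_eq_coe_finsetCard, htfin.coe_toFinset, ht] at this
  norm_cast at this
  omega

theorem exists_fin_cover_of_coveringNumber_le [Nonempty X] {ε : ℝ≥0} {A : Set X} {N : ℕ}
    (h : coveringNumber ε A ≤ N) : ∃ c : Fin N → X, ∀ y ∈ A, ∃ i, dist y (c i) ≤ ε := by
  obtain ⟨C, -, hCfin, hcover, hC⟩ := exists_set_encard_eq_coveringNumber (h.trans_lt (by simp)).ne
  obtain ⟨n, f, hf, rfl⟩ := hCfin.fin_param
  have hnN : n ≤ N := by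
    rw [← hC, ← image_univ, hf.encard_image, encard_univ, ENat.card_eq_coe_fintype_card,
      Fintype.card_fin] at h
    exact_mod_cast h
  refine ⟨fun i => if hi : (i : ℕ) < n then f ⟨i, hi⟩ else Classical.arbitrary X, fun y hy => ?_⟩
  obtain ⟨_, ⟨i, rfl⟩, hyi⟩ := hcover hy
  exact ⟨Fin.castLE hnN i, by simpa [edist_dist] using hyi⟩

theorem Doubling.of_packingNumber_le {N : ℕ}
    (h : ∀ r > 0, ∀ x : X, packingNumber (r / 2).toNNReal (closedBall x r) ≤ N) :
    Doubling (dist : X → X → ℝ) N := by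
  intro r hr x
  have : Nonempty X := ⟨x⟩
  obtain ⟨c, hc⟩ :=
    exists_fin_cover_of_coveringNumber_le ((coveringNumber_le_packingNumber _ _).trans (h r hr x))
  refine ⟨c, fun y hy => ?_⟩
  obtain ⟨i, hi⟩ := hc y (mem_closedBall_comm.mp hy)
  exact ⟨i, by rwa [dist_comm, Real.coe_toNNReal _ (by positivity)] at hi⟩

end Doubling

theorem TSPEfficient.card_le_of_isSeparated {X : Type*} [PseudoMetricSpace X] {K r : ℝ}
    (hX : TSPEfficient (dist : X → X → ℝ) K) (hK : 0 ≤ K) (hr : 0 < r) {x : X} {F : Finset X}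
    (hFx : (F : Set X) ⊆ closedBall x r) (hF : IsSeparated (r / 2).toNNReal (F : Set X)) :
    (F.card : ℝ) ≤ 4 * K + 1 := by
  set p : Lamp X := (F, x)
  set q : Lamp X := (∅, x)
  have hsd : sd p q = F := by simp [sd, p, q]
  have hsep : (F : Set X).Pairwise (fun a b => r / 2 ≤ dist a b) := hF.mono' fun a b hab => by
    rw [edist_dist] at hab
    exact (ENNReal.ofReal_lt_ofReal_iff'.mp hab).1.le
  have hTSCP : TSCP dist p q ≤ 2 * r := by
    rw [TSCP_eq_diam]
    refine diam_le_of_subset_closedBall hr.le (union_subset ?_ (hsd ▸ hFx))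
    simp [p, q, hr.le]
  have hbound : r / 2 * (F.card - 1) ≤ r / 2 * (4 * K) :=
    calc r / 2 * (F.card - 1) ≤ TSP dist p q :=
          mul_card_sub_one_le_TSP (by positivity) p q hsd.ge hsep
      _ ≤ K * TSCP dist p q := hX p q
      _ ≤ K * (2 * r) := mul_le_mul_of_nonneg_left hTSCP hK
      _ = r / 2 * (4 * K) := by ring
  linarith [le_of_mul_le_mul_left hbound (by positivity)]

/-- A `K`-TSP-efficient metric space is `D`-doubling with `D ≤ 4K + 1`. -/
theorem statement4 (X : Type u) [MetricSpace X] (K : ℝ) (hK : 0 ≤ K)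
    (hX : TSPEfficient (dist : X → X → ℝ) K) :
    ∃ D : ℕ, (D : ℝ) ≤ 4 * K + 1 ∧ Doubling (dist : X → X → ℝ) D :=
  ⟨⌊4 * K + 1⌋₊, Nat.floor_le (by linarith), Doubling.of_packingNumber_le fun r hr x =>
    packingNumber_le_of_forall_finset fun F hFx hF =>
      Nat.le_floor (hX.card_le_of_isSeparated hK hr hFx hF)⟩

end Lamplighter
end
end

section
/- Let (X,d) be a finite metric space. Then for any map f: X → ℝ and any ε > 0, there exists Σ < ∞ such that for any scaling factor σ ≥ Σ there exists a map f̃: X → ℤ such that: f̃ is injective; Lip(f̃) ≤ σ(Lip(f)+ε); and for every x,y ∈ X, |f̃(x) − f̃(y)| ≥ σ(|f(x) − f(y)| − ε). -/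
open Metric Set
open scoped Classical ENNReal NNReal

noncomputable section

namespace Lamplighter

variable {X Y Z : Type*}

lemma abs_sub_perturb {a b A B N : ℝ} (h1 : |A - a| ≤ N) (h2 : |B - b| ≤ N) :
    |A - B| ≤ |a - b| + 2 * N ∧ |a - b| ≤ |A - B| + 2 * N := by
  rw [abs_le] at h1 h2
  constructor <;>
  · rcases abs_cases (a - b) with ⟨h, _⟩ | ⟨h, _⟩ <;>
      rcases abs_cases (A - B) with ⟨h', _⟩ | ⟨h', _⟩ <;> linarith

/-- (Perturbation lemma.) Let `X` be a finite metric space, `f : X → ℝ`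
an `L`-Lipschitz map, and `ε > 0`. Then there is `Sig < ∞` such that for every scaling
factor `σ ≥ Sig` there is an injective map `f̃ : X → ℤ` with `Lip(f̃) ≤ σ (L + ε)` and
`|f̃ x - f̃ y| ≥ σ (|f x - f y| - ε)` for all `x, y`. -/
theorem statement5 (X : Type u) [MetricSpace X] [Fintype X] (f : X → ℝ) (L : ℝ)
    (hL : ∀ x y : X, |f x - f y| ≤ L * dist x y) (ε : ℝ) (hε : 0 < ε) :
    ∃ Sig : ℝ, ∀ σ : ℝ, Sig ≤ σ → ∃ ftil : X → ℤ,
      Function.Injective ftil ∧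
      (∀ x y : X, |(ftil x : ℝ) - (ftil y : ℝ)| ≤ σ * (L + ε) * dist x y) ∧
      (∀ x y : X, σ * (|f x - f y| - ε) ≤ |(ftil x : ℝ) - (ftil y : ℝ)|) := by
  by_cases hX : ∃ x y : X, x ≠ y
  · obtain ⟨x₀, y₀, hxy⟩ := hX
    set s : Finset ℝ := Finset.image (fun p : X × X => dist p.1 p.2)
      (Finset.univ.filter fun p : X × X => p.1 ≠ p.2) with hs
    have hsne : s.Nonempty := ⟨dist x₀ y₀, by
      simp only [hs, Finset.mem_image, Finset.mem_filter, Finset.mem_univ, true_and]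
      exact ⟨(x₀, y₀), hxy, rfl⟩⟩
    set δ := s.min' hsne with hδ
    have hδpos : 0 < δ := by
      have hmem := s.min'_mem hsne
      simp only [hs, Finset.mem_image, Finset.mem_filter, Finset.mem_univ, true_and] at hmem
      obtain ⟨p, hp, h⟩ := hmem
      rw [← hδ] at h
      rw [← h]
      exact dist_pos.2 hp
    have hδle : ∀ x y : X, x ≠ y → δ ≤ dist x y := fun x y h =>
      s.min'_le _ (by
        simp only [hs, Finset.mem_image, Finset.mem_filter, Finset.mem_univ, true_and]
        exact ⟨(x, y), h, rfl⟩)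
    set n := Fintype.card X with hn
    have hnpos : 0 < n := Fintype.card_pos_iff.2 ⟨x₀⟩
    set N : ℝ := (n : ℝ) with hN
    have hNpos : 0 < N := by rw [hN]; exact_mod_cast hnpos
    set e : X → ℤ := fun x => ((Fintype.equivFin X x : ℕ) : ℤ) with he
    have he0 : ∀ x, 0 ≤ e x := fun x => Int.ofNat_nonneg _
    have heN : ∀ x, e x < n := fun x => by
      simp only [he, hn]
      exact_mod_cast (Fintype.equivFin X x).2
    have heinj : Function.Injective e := fun x y h => by
      simp only [he] at h
      apply (Fintype.equivFin X).injective
      exact Fin.ext (by exact_mod_cast h)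
    refine ⟨max 1 (max (2 * N / ε) (2 * N / (ε * δ))), fun σ hσ => ?_⟩
    have hσ1 : (1 : ℝ) ≤ σ := le_trans (le_max_left _ _) hσ
    have hσ0 : 0 < σ := lt_of_lt_of_le one_pos hσ1
    have hσε : 2 * N ≤ σ * ε := by
      have h1 : 2 * N / ε ≤ σ := le_trans (le_trans (le_max_left _ _) (le_max_right _ _)) hσ
      rw [div_le_iff₀ hε] at h1
      linarith
    have hσεδ : 2 * N ≤ σ * ε * δ := by
      have h1 : 2 * N / (ε * δ) ≤ σ :=
        le_trans (le_trans (le_max_right _ _) (le_max_right _ _)) hσ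
      rw [div_le_iff₀ (mul_pos hε hδpos)] at h1
      nlinarith
    set F : X → ℤ := fun x => e x + n * ⌊σ * f x / N⌋ with hF
    have key : ∀ x : X, |((F x : ℤ) : ℝ) - σ * f x| ≤ N := by
      intro x
      have h1 : (⌊σ * f x / N⌋ : ℝ) ≤ σ * f x / N := Int.floor_le _
      have h2 : σ * f x / N - 1 < (⌊σ * f x / N⌋ : ℝ) := by
        linarith [Int.lt_floor_add_one (σ * f x / N)]
      have h3 : N * (⌊σ * f x / N⌋ : ℝ) ≤ σ * f x := by
        calc N * (⌊σ * f x / N⌋ : ℝ) ≤ N * (σ * f x / N) :=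
              mul_le_mul_of_nonneg_left h1 hNpos.le
          _ = σ * f x := by field_simp
      have h4 : σ * f x - N ≤ N * (⌊σ * f x / N⌋ : ℝ) := by
        have h5 := mul_lt_mul_of_pos_left h2 hNpos
        have heq : N * (σ * f x / N) = σ * f x := by field_simp
        nlinarith
      have he1 : (0 : ℝ) ≤ (e x : ℝ) := by exact_mod_cast he0 x
      have he2 : (e x : ℝ) ≤ N - 1 := by
        have h5 : e x ≤ (n : ℤ) - 1 := by have := heN x; omega
        have h6 : (e x : ℝ) ≤ ((n : ℤ) : ℝ) - 1 := by exact_mod_cast h5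
        simpa [hN] using h6
      have hFx : ((F x : ℤ) : ℝ) = (e x : ℝ) + N * (⌊σ * f x / N⌋ : ℝ) := by
        simp only [hF]
        push_cast
        ring
      rw [hFx, abs_le]
      constructor <;> linarith
    refine ⟨F, ?_, ?_, ?_⟩
    · intro x y h
      apply heinj
      have hx : F x % n = e x := by
        simp only [hF]
        rw [Int.add_mul_emod_self_left, Int.emod_eq_of_lt (he0 x) (heN x)]
      have hy : F y % n = e y := by
        simp only [hF]
        rw [Int.add_mul_emod_self_left, Int.emod_eq_of_lt (he0 y) (heN y)]
      rw [← hx, ← hy, h]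
    · intro x y
      by_cases hxy2 : x = y
      · subst hxy2
        simp only [sub_self, abs_zero, dist_self, mul_zero]
        exact le_refl 0
      · have hd : δ ≤ dist x y := hδle x y hxy2
        have hd0 : 0 < dist x y := dist_pos.2 hxy2
        have hfxy : |σ * f x - σ * f y| = σ * |f x - f y| := by
          rw [← mul_sub, abs_mul, abs_of_pos hσ0]
        have htri := (abs_sub_perturb (key x) (key y)).1
        calc |((F x : ℤ) : ℝ) - ((F y : ℤ) : ℝ)|
            ≤ σ * |f x - f y| + 2 * N := by rw [← hfxy]; exact htri
          _ ≤ σ * (L * dist x y) + σ * ε * δ := by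
              have h6 := hL x y
              have h7 : σ * |f x - f y| ≤ σ * (L * dist x y) :=
                mul_le_mul_of_nonneg_left h6 hσ0.le
              linarith
          _ ≤ σ * (L * dist x y) + σ * ε * dist x y := by
              have : σ * ε * δ ≤ σ * ε * dist x y :=
                mul_le_mul_of_nonneg_left hd (by positivity)
              linarith
          _ = σ * (L + ε) * dist x y := by ring
    · intro x y
      have hfxy : |σ * f x - σ * f y| = σ * |f x - f y| := by
        rw [← mul_sub, abs_mul, abs_of_pos hσ0]
      have htri := (abs_sub_perturb (key x) (key y)).2
      rw [hfxy] at htri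
      calc σ * (|f x - f y| - ε) = σ * |f x - f y| - σ * ε := by ring
        _ ≤ σ * |f x - f y| - 2 * N := by linarith
        _ ≤ _ := by linarith
  · push_neg at hX
    refine ⟨0, fun σ hσ => ⟨fun _ => 0, fun a b _ => hX a b, ?_, ?_⟩⟩
    · intro x y
      rw [hX x y]
      simp
    · intro x y
      rw [hX x y]
      simp only [sub_self, abs_zero, Int.cast_zero]
      nlinarith

end Lamplighter
end
end

section
/- There exist three ℝ-trees T₁, T₂, T₃ such that, for every σ ≥ 1, there exists a 6-biLipschitz embedding of (La(ℤ), TSCP + σρ) into the ℓ1-product T₁ ⊕₁ T₂ ⊕₁ T₃, and an 18-biLipschitz embedding of (La(ℤ), TSCP + σρ) into the ℓ∞-product T₁ ⊕_∞ T₂ ⊕_∞ T₃. -/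
open Metric Set
open scoped Classical ENNReal NNReal

noncomputable section

namespace Lamplighter

variable {X Y Z : Type*}

/-!
All three trees are one ℝ-tree `LampTree`, whose points are heights carrying finitely many lamps
above them. The height at which two points merge is an ultrametric, so the tree satisfies the
four-point condition; it is also geodesic. In a geodesic four-point space a point between `P`
and `Q` lies on every path from `P` to `Q`, so every arc contains, hence equals, the geodesic.

A configuration `(A, x)` goes to the point at height `x` below the lamps of `A` to the right of
`x`, to its mirror image built from the lamps to the left, and to a marker at depth `σ` below a
code of `A`. The first two distances add up to `2 (max - min)` of `{x, y} ∪ (A Δ B)`, that is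
to `2 TSCP`, and the marker contributes between `2σρ` and `3σρ`. Hence the ℓ1 distance lies
between `2` and `3` times `TSCP + σρ`, and the ℓ∞ distance between `2/3` and `3` times it.
-/

open scoped symmDiff

section RTree

variable {T : Type*} [MetricSpace T]

def FourPointCondition (T : Type*) [PseudoMetricSpace T] : Prop :=
  ∀ p q r w : T, dist p q + dist r w ≤ max (dist p r + dist q w) (dist p w + dist q r)

/-- In a tree the geodesic from `W` to `W'` runs through `m`. -/
lemma FourPointCondition.dist_le_of_between (h4 : FourPointCondition T) {P Q m W W' : T}
    (hm : dist P m + dist m Q = dist P Q)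
    (hW : dist P W - dist W Q < dist P m - dist m Q)
    (hW' : dist P m - dist m Q ≤ dist P W' - dist W' Q) :
    dist W' m ≤ dist W W' := by
  have h₁ := h4 W' m P Q
  have h₂ := h4 W m P Q
  have h₃ := h4 P W' Q W
  have := dist_nonneg (x := W) (y := m)
  rw [dist_comm W' P, dist_comm m P] at h₁
  rw [dist_comm W P, dist_comm m P] at h₂
  rw [dist_comm W' W, dist_comm Q W] at h₃
  rcases le_max_iff.1 h₁ with h₁ | h₁ <;> rcases le_max_iff.1 h₂ with h₂ | h₂ <;>
    rcases le_max_iff.1 h₃ with h₃ | h₃ <;> linarith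

/-- At the first time `δ` enters `{W | dist P m - dist m Q ≤ dist P W - dist W Q}`,
`dist_le_of_between` pins it to `m`. -/
lemma FourPointCondition.mem_image_of_between (h4 : FourPointCondition T) {P Q m : T}
    (hm : dist P m + dist m Q = dist P Q) {δ : ℝ → T} (hδ : ContinuousOn δ (Icc 0 1))
    (hδ0 : δ 0 = P) (hδ1 : δ 1 = Q) : m ∈ δ '' Icc 0 1 := by
  set g : T → ℝ := fun W => dist P W - dist W Q
  have hg : Continuous g := by fun_prop
  by_cases hmP : g m ≤ g P
  · have hPm : dist P m = 0 := by
      simp only [g, dist_self] at hmP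
      linarith [dist_nonneg (x := P) (y := m)]
    exact ⟨0, left_mem_Icc.2 zero_le_one, hδ0.trans (dist_eq_zero.1 hPm)⟩
  set S := Icc 0 1 ∩ (g ∘ δ) ⁻¹' Ici (g m)
  have hS : IsClosed S := (hg.comp_continuousOn hδ).preimage_isClosed_of_isClosed isClosed_Icc
    isClosed_Ici
  have h1S : (1 : ℝ) ∈ S := by
    refine ⟨right_mem_Icc.2 zero_le_one, ?_⟩
    simp only [mem_preimage, Function.comp_apply, hδ1, g, dist_self, mem_Ici]
    linarith [dist_nonneg (x := P) (y := m), dist_nonneg (x := m) (y := Q)]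
  have hbdd : BddBelow S := ⟨0, fun v hv => hv.1.1⟩
  have hv₁ : sInf S ∈ S := hS.csInf_mem ⟨1, h1S⟩ hbdd
  set v₁ := sInf S
  have hv₁0 : 0 < v₁ := by
    refine lt_of_le_of_ne hv₁.1.1 fun h => hmP ?_
    simpa [S, ← h, hδ0] using hv₁.2
  have hbelow : ∀ v ∈ Icc (0 : ℝ) 1, v < v₁ → dist (δ v₁) m ≤ dist (δ v) (δ v₁) :=
    fun v hv hlt => h4.dist_le_of_between hm
      (not_le.1 fun h => (csInf_le hbdd ⟨hv, h⟩).not_gt hlt) hv₁.2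
  refine ⟨v₁, hv₁.1, eq_of_forall_dist_le fun ε hε => ?_⟩
  obtain ⟨η, hη, hδη⟩ := Metric.continuousWithinAt_iff.1 (hδ v₁ hv₁.1) ε hε
  set v := max 0 (v₁ - η / 2)
  have hv : v ∈ Icc (0 : ℝ) 1 := ⟨le_max_left _ _, max_le zero_le_one (by linarith [hv₁.1.2])⟩
  have hvv₁ : v < v₁ := max_lt hv₁0 (by linarith)
  have hdist : dist v v₁ < η := by
    rw [Real.dist_eq, abs_of_neg (by linarith)]
    linarith [le_max_right 0 (v₁ - η / 2)]
  exact (hbelow v hv hvv₁).trans (hδη hv hdist).le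

lemma IsArc.eq_of_isPreconnected {x y : T} {A B : Set T} (hA : IsArc x y A)
    (hB : IsPreconnected B) (hxB : x ∈ B) (hyB : y ∈ B) (hBA : B ⊆ A) : A = B := by
  obtain ⟨δ, hδc, hδi, rfl, rfl, rfl⟩ := hA
  refine Subset.antisymm ?_ hBA
  set f : Icc (0 : ℝ) 1 → T := (Icc 0 1).domRestrict δ
  have hf : Topology.IsClosedEmbedding f :=
    (continuousOn_iff_continuous_domRestrict.1 hδc).isClosedEmbedding hδi.injective
  have hpre : IsPreconnected (f ⁻¹' B) := by
    rw [← hf.isInducing.isPreconnected_image, image_preimage_eq_of_subset]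
    · exact hB
    · rwa [range_domRestrict]
  have hIcc : Icc (0 : ℝ) 1 ⊆ (↑) '' (f ⁻¹' B) :=
    (hpre.image _ continuous_subtype_val.continuousOn).Icc_subset
      ⟨⟨0, left_mem_Icc.2 zero_le_one⟩, hxB, rfl⟩ ⟨⟨1, right_mem_Icc.2 zero_le_one⟩, hyB, rfl⟩
  rintro _ ⟨v, hv, rfl⟩
  obtain ⟨w, hw, rfl⟩ := hIcc hv
  exact hw

lemma continuousOn_of_dist_eq_abs {s : Set ℝ} {γ : ℝ → T}
    (hγ : ∀ u ∈ s, ∀ v ∈ s, dist (γ u) (γ v) = |u - v|) : ContinuousOn γ s :=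
  (LipschitzOnWith.of_dist_le_mul (K := 1) fun u hu v hv => by
    rw [hγ u hu v hv, NNReal.coe_one, one_mul, Real.dist_eq]).continuousOn

namespace IsGeodesicSeg

variable {x y : T} {G : Set T}

lemma dist_add_dist (hG : IsGeodesicSeg x y G) {z : T} (hz : z ∈ G) :
    dist x z + dist z y = dist x y := by
  obtain ⟨γ, hγ0, hγ1, hγ, rfl⟩ := hG
  obtain ⟨s, hs, rfl⟩ := hz
  have hd := dist_nonneg (x := x) (y := y)
  have hx := hγ 0 (left_mem_Icc.2 hd) s hs
  have hy := hγ s hs _ (right_mem_Icc.2 hd)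
  rw [hγ0] at hx
  rw [hγ1] at hy
  rw [hx, hy, abs_of_nonpos (by linarith [hs.1]), abs_of_nonpos (by linarith [hs.2])]
  ring

lemma isPreconnected (hG : IsGeodesicSeg x y G) : IsPreconnected G := by
  obtain ⟨γ, -, -, hγ, rfl⟩ := hG
  exact isPreconnected_Icc.image γ (continuousOn_of_dist_eq_abs hγ)

lemma left_mem (hG : IsGeodesicSeg x y G) : x ∈ G := by
  obtain ⟨γ, hγ0, -, -, rfl⟩ := hG
  exact ⟨0, left_mem_Icc.2 dist_nonneg, hγ0⟩

lemma right_mem (hG : IsGeodesicSeg x y G) : y ∈ G := by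
  obtain ⟨γ, -, hγ1, -, rfl⟩ := hG
  exact ⟨dist x y, right_mem_Icc.2 dist_nonneg, hγ1⟩

lemma isArc (hG : IsGeodesicSeg x y G) (hxy : x ≠ y) : IsArc x y G := by
  obtain ⟨γ, hγ0, hγ1, hγ, rfl⟩ := hG
  have hd : 0 < dist x y := dist_pos.2 hxy
  have hmaps : MapsTo (· * dist x y) (Icc (0 : ℝ) 1) (Icc 0 (dist x y)) := fun v hv =>
    ⟨mul_nonneg hv.1 hd.le, mul_le_of_le_one_left hd.le hv.2⟩
  refine ⟨fun v => γ (v * dist x y), (continuousOn_of_dist_eq_abs hγ).comp (by fun_prop) hmaps,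
    fun u hu v hv huv => ?_, by simpa using hγ0, by simpa using hγ1, ?_⟩
  · have := hγ _ (hmaps hu) _ (hmaps hv)
    dsimp only at huv this
    rw [huv, dist_self, eq_comm, abs_eq_zero, ← sub_mul, mul_eq_zero] at this
    exact sub_eq_zero.1 (this.resolve_right hd.ne')
  · rw [← image_image γ (· * dist x y), image_mul_right_Icc zero_le_one hd.le, zero_mul, one_mul]

end IsGeodesicSeg

theorem FourPointCondition.isRTree (h4 : FourPointCondition T)
    (hgeo : ∀ x y : T, ∃ G, IsGeodesicSeg x y G) : IsRTree T := by
  intro x y hxy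
  obtain ⟨G, hG⟩ := hgeo x y
  have harc : ∀ A, IsArc x y A → A = G := by
    intro A hA
    refine hA.eq_of_isPreconnected hG.isPreconnected hG.left_mem hG.right_mem fun z hz => ?_
    obtain ⟨δ, hδ, -, hδ0, hδ1, rfl⟩ := hA
    exact h4.mem_image_of_between (hG.dist_add_dist hz) hδ hδ0 hδ1
  exact ⟨⟨G, hG.isArc hxy⟩, fun A A' hA hA' => (harc A hA).trans (harc A' hA').symm,
    fun A hA => harc A hA ▸ hG⟩

end RTree

lemma add_le_max_add_of_le_max {α : Type*} (u : α → α → ℝ) (hu : ∀ x y, u x y = u y x)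
    (hmax : ∀ x y z, u x z ≤ max (u x y) (u y z)) (a b c d : α) :
    u a b + u c d ≤ max (u a c + u b d) (u a d + u b c) := by
  have h₁ : u a b ≤ max (u a c) (u b c) := hu c b ▸ hmax a c b
  have h₂ : u a b ≤ max (u a d) (u b d) := hu d b ▸ hmax a d b
  have h₃ : u c d ≤ max (u a c) (u a d) := hu c a ▸ hmax c a d
  have h₄ : u c d ≤ max (u b c) (u b d) := hu c b ▸ hmax c b d
  have h₅ : u a d ≤ max (u a b) (u b d) := hmax a b d
  have h₆ : u b d ≤ max (u a b) (u a d) := hu b a ▸ hmax b a d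
  rw [le_max_iff] at h₁ h₂ h₃ h₄ h₅ h₆ ⊢
  rcases h₁ with h₁ | h₁ <;> rcases h₂ with h₂ | h₂ <;> rcases h₃ with h₃ | h₃ <;>
    rcases h₄ with h₄ | h₄ <;> rcases h₅ with h₅ | h₅ <;> rcases h₆ with h₆ | h₆ <;>
    first | exact Or.inl (by linarith) | exact Or.inr (by linarith)

lemma max_max_mem_Icc {a b c : ℝ} (ha : 0 ≤ a) (hb : 0 ≤ b) (hc : 0 ≤ c) :
    max a (max b c) ∈ Icc ((a + b + c) / 3) (a + b + c) := by
  have := le_max_left a (max b c)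
  have := le_max_left b c
  have := le_max_right b c
  have := le_max_right a (max b c)
  exact ⟨by linarith, max_le (by linarith) (max_le (by linarith) (by linarith))⟩

lemma biLipWith_of_bounds {Y Z : Type*} {dY : Y → Y → ℝ} {dZ : Z → Z → ℝ} {f : Y → Z}
    (hf : Function.Injective f) {a b C : ℝ} (ha : 0 < a) (hC : b ≤ C * a)
    (hdY : ∀ x y, 0 ≤ dY x y) (h : ∀ x y, a * dY x y ≤ dZ (f x) (f y) ∧ dZ (f x) (f y) ≤ b * dY x y) :
    BiLipWith dY dZ C f :=
  ⟨hf, a, ha, fun x y => ⟨(h x y).1,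
    (h x y).2.trans (mul_le_mul_of_nonneg_right hC (hdY x y))⟩⟩

/-- A point sits at `height` below its `lamps`. Two points merge at the largest height where their
heights or lamps differ, and their distance is the length of the path through that height. -/
@[ext]
structure LampTree where
  lamps : Finset ℝ
  height : ℝ
  height_lt : ∀ a ∈ lamps, height < a

namespace LampTree

def topHeight (x y : ℝ) (D : Finset ℝ) : ℝ :=
  (insert x (insert y D)).max' (Finset.insert_nonempty _ _)

lemma topHeight_le_iff {x y b : ℝ} {D : Finset ℝ} :
    topHeight x y D ≤ b ↔ x ≤ b ∧ y ≤ b ∧ ∀ a ∈ D, a ≤ b := by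
  simp [topHeight, Finset.max'_le_iff]

lemma le_topHeight (x y : ℝ) (D : Finset ℝ) :
    x ≤ topHeight x y D ∧ y ≤ topHeight x y D ∧ ∀ a ∈ D, a ≤ topHeight x y D :=
  topHeight_le_iff.1 le_rfl

lemma topHeight_comm (x y : ℝ) (D : Finset ℝ) : topHeight x y D = topHeight y x D := by
  simp only [topHeight, Finset.insert_comm]

lemma topHeight_empty (x y : ℝ) : topHeight x y ∅ = max x y :=
  le_antisymm (topHeight_le_iff.2 ⟨le_max_left _ _, le_max_right _ _, by simp⟩)
    (max_le (le_topHeight x y ∅).1 (le_topHeight x y ∅).2.1)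

def mergeHeight (P Q : LampTree) : ℝ := topHeight P.height Q.height (P.lamps ∆ Q.lamps)

lemma height_le_mergeHeight (P Q : LampTree) :
    P.height ≤ mergeHeight P Q ∧ Q.height ≤ mergeHeight P Q :=
  ⟨(le_topHeight _ _ _).1, (le_topHeight _ _ _).2.1⟩

lemma le_mergeHeight_of_mem {P Q : LampTree} {a : ℝ} (ha : a ∈ P.lamps ∆ Q.lamps) :
    a ≤ mergeHeight P Q :=
  (le_topHeight _ _ _).2.2 a ha

lemma mergeHeight_comm (P Q : LampTree) : mergeHeight P Q = mergeHeight Q P := by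
  rw [mergeHeight, topHeight_comm, symmDiff_comm, mergeHeight]

lemma mergeHeight_self (P : LampTree) : mergeHeight P P = P.height := by
  rw [mergeHeight, symmDiff_self, Finset.bot_eq_empty, topHeight_empty, max_self]

lemma mergeHeight_le_max (P Q R : LampTree) :
    mergeHeight P R ≤ max (mergeHeight P Q) (mergeHeight Q R) := by
  refine topHeight_le_iff.2 ⟨(height_le_mergeHeight P Q).1.trans (le_max_left _ _),
    (height_le_mergeHeight Q R).2.trans (le_max_right _ _), fun a ha => ?_⟩
  rcases Finset.mem_union.1 (symmDiff_triangle P.lamps Q.lamps R.lamps ha) with h | h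
  · exact (le_mergeHeight_of_mem h).trans (le_max_left _ _)
  · exact (le_mergeHeight_of_mem h).trans (le_max_right _ _)

lemma eq_of_mergeHeight {P Q : LampTree} (hP : mergeHeight P Q = P.height)
    (hQ : mergeHeight P Q = Q.height) : P = Q := by
  refine LampTree.ext (symmDiff_eq_bot.1 (Finset.eq_empty_of_forall_notMem fun a ha => ?_))
    (hP.symm.trans hQ)
  have ha' := le_mergeHeight_of_mem ha
  rcases Finset.mem_symmDiff.1 ha with ⟨h, -⟩ | ⟨h, -⟩
  · linarith [P.height_lt a h, hP ▸ ha']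
  · linarith [Q.height_lt a h, hQ ▸ ha']

instance : MetricSpace LampTree where
  dist P Q := 2 * mergeHeight P Q - P.height - Q.height
  dist_self P := by rw [mergeHeight_self]; ring
  dist_comm P Q := by rw [mergeHeight_comm]; ring
  dist_triangle P Q R := by
    have := height_le_mergeHeight P Q
    have := height_le_mergeHeight Q R
    rcases le_max_iff.1 (mergeHeight_le_max P Q R) with h | h <;> linarith
  eq_of_dist_eq_zero {P Q} h := by
    have := height_le_mergeHeight P Q
    exact eq_of_mergeHeight (by linarith) (by linarith)

lemma dist_eq (P Q : LampTree) : dist P Q = 2 * mergeHeight P Q - P.height - Q.height := rfl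

lemma fourPointCondition : FourPointCondition LampTree := fun P Q R W => by
  have := add_le_max_add_of_le_max mergeHeight mergeHeight_comm mergeHeight_le_max P Q R W
  simp only [dist_eq]
  rcases le_max_iff.1 this with h | h
  · exact le_max_of_le_left (by linarith)
  · exact le_max_of_le_right (by linarith)

def ray (S : Finset ℝ) (x : ℝ) : LampTree :=
  ⟨S.filter (x < ·), x, fun _ ha => (Finset.mem_filter.1 ha).2⟩

lemma ray_self (P : LampTree) : ray P.lamps P.height = P :=
  LampTree.ext (Finset.filter_true_of_mem P.height_lt) rfl

lemma mem_ray_symmDiff_iff {S S' : Finset ℝ} {x y a : ℝ} (hx : x < a) (hy : y < a) :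
    a ∈ (ray S x).lamps ∆ (ray S' y).lamps ↔ a ∈ S ∆ S' := by
  simp [ray, Finset.mem_symmDiff, hx, hy]

lemma mergeHeight_ray (S S' : Finset ℝ) (x y : ℝ) :
    mergeHeight (ray S x) (ray S' y) = topHeight x y (S ∆ S') := by
  have hxy := le_topHeight x y (S ∆ S')
  have hray := height_le_mergeHeight (ray S x) (ray S' y)
  refine le_antisymm (topHeight_le_iff.2 ⟨hxy.1, hxy.2.1, fun a ha => ?_⟩)
    (topHeight_le_iff.2 ⟨hray.1, hray.2, fun a ha => ?_⟩)
  · by_contra! hlt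
    exact hlt.not_ge (hxy.2.2 a ((mem_ray_symmDiff_iff (hxy.1.trans_lt hlt)
      (hxy.2.1.trans_lt hlt)).1 ha))
  · by_contra! hlt
    exact hlt.not_ge (le_mergeHeight_of_mem ((mem_ray_symmDiff_iff (hray.1.trans_lt hlt)
      (hray.2.trans_lt hlt)).2 ha))

lemma dist_ray (S S' : Finset ℝ) (x y : ℝ) :
    dist (ray S x) (ray S' y) = 2 * topHeight x y (S ∆ S') - x - y := by
  rw [dist_eq, mergeHeight_ray]
  rfl

lemma dist_ray_same (S : Finset ℝ) (x y : ℝ) : dist (ray S x) (ray S y) = |x - y| := by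
  rw [dist_ray, symmDiff_self, Finset.bot_eq_empty, topHeight_empty]
  linarith [max_sub_min_eq_abs' x y, min_add_max x y]

lemma dist_ray_of_le_mergeHeight (P Q : LampTree) {x y : ℝ} (hx : P.height ≤ x)
    (hxc : x ≤ mergeHeight P Q) (hy : Q.height ≤ y) (hyc : y ≤ mergeHeight P Q) :
    dist (ray P.lamps x) (ray Q.lamps y) = 2 * mergeHeight P Q - x - y := by
  have hxy := le_topHeight x y (P.lamps ∆ Q.lamps)
  have htop : topHeight x y (P.lamps ∆ Q.lamps) = mergeHeight P Q :=
    le_antisymm (topHeight_le_iff.2 ⟨hxc, hyc, fun _ => le_mergeHeight_of_mem⟩)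
      (topHeight_le_iff.2 ⟨hx.trans hxy.1, hy.trans hxy.2.1, hxy.2.2⟩)
  rw [dist_ray, htop]

/-- Up from `P` along its own lamps to the merge height, then down along those of `Q`. -/
def geodesic (P Q : LampTree) (u : ℝ) : LampTree :=
  if u ≤ mergeHeight P Q - P.height then ray P.lamps (P.height + u)
  else ray Q.lamps (2 * mergeHeight P Q - P.height - u)

lemma dist_geodesic (P Q : LampTree) {u v : ℝ} (hu : 0 ≤ u) (huv : u ≤ v)
    (hv : v ≤ dist P Q) : dist (geodesic P Q u) (geodesic P Q v) = v - u := by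
  have hc := height_le_mergeHeight P Q
  rw [dist_eq] at hv
  unfold geodesic
  split_ifs with hu' hv' hv'
  · rw [dist_ray_same, abs_of_nonpos (by linarith)]
    ring
  · rw [dist_ray_of_le_mergeHeight P Q (by linarith) (by linarith) (by linarith) (by linarith)]
    ring
  · exact absurd (huv.trans hv') hu'
  · rw [dist_ray_same, abs_of_nonneg (by linarith)]
    ring

lemma geodesic_zero (P Q : LampTree) : geodesic P Q 0 = P := by
  rw [geodesic, if_pos (by linarith [height_le_mergeHeight P Q]), add_zero, ray_self]

lemma geodesic_dist (P Q : LampTree) : geodesic P Q (dist P Q) = Q := by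
  have hc := height_le_mergeHeight P Q
  unfold geodesic
  split_ifs with h
  · rw [dist_eq] at h
    have hcQ : mergeHeight P Q = Q.height := by linarith
    calc ray P.lamps (P.height + dist P Q) = ray P.lamps (mergeHeight P Q) := by
          rw [dist_eq, hcQ]
          ring_nf
      _ = ray Q.lamps Q.height := dist_eq_zero.1 <| by
          rw [dist_ray_of_le_mergeHeight P Q hc.1 le_rfl le_rfl hcQ.ge, hcQ]
          ring
      _ = Q := ray_self Q
  · rw [dist_eq, show 2 * mergeHeight P Q - P.height - (2 * mergeHeight P Q - P.height - Q.height)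
      = Q.height by ring, ray_self]

lemma exists_isGeodesicSeg (P Q : LampTree) : ∃ G, IsGeodesicSeg P Q G := by
  refine ⟨_, geodesic P Q, geodesic_zero P Q, geodesic_dist P Q, fun u hu v hv => ?_, rfl⟩
  rcases le_total u v with h | h
  · rw [dist_geodesic P Q hu.1 h hv.2, abs_of_nonpos (sub_nonpos.2 h), neg_sub]
  · rw [dist_comm, dist_geodesic P Q hv.1 h hu.2, abs_of_nonneg (sub_nonneg.2 h)]

theorem isRTree : IsRTree LampTree :=
  fourPointCondition.isRTree exists_isGeodesicSeg

end LampTree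

section Embedding

open LampTree

def lampCell (p q : Lamp ℤ) : Finset ℤ := insert p.2 (insert q.2 (p.1 ∆ q.1))

lemma lampCell_nonempty (p q : Lamp ℤ) : (lampCell p q).Nonempty := Finset.insert_nonempty _ _

lemma TSCP_int_eq_max'_sub_min' (p q : Lamp ℤ) :
    TSCP (fun a b : ℤ => dist a b) p q =
      ((lampCell p q).image (↑)).max' ((lampCell_nonempty p q).image _) -
        ((lampCell p q).image ((↑) : ℤ → ℝ)).min' ((lampCell_nonempty p q).image _) := by
  have hset : ({p.2, q.2} ∪ sd p q : Set ℤ) = ↑(lampCell p q) := by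
    ext
    simp only [sd, lampCell, Finset.coe_insert, Finset.coe_symmDiff, Set.mem_union,
      Set.mem_insert_iff, Set.mem_singleton_iff, Set.mem_symmDiff, Set.mem_sdiff]
    tauto
  have hdiam : ∀ s : Set ℤ, ediamD (fun a b : ℤ => dist a b) s = Metric.ediam s := fun s => by
    simp only [ediamD, Metric.ediam, edist_dist]
  rw [TSCP, hdiam, hset, ← Metric.diam, ← Real.isometry_intCast.diam_image, ← Finset.coe_image,
    Real.diam_eq (Finset.finite_toSet _).isBounded, Finset.Nonempty.csSup_eq_max',
    Finset.Nonempty.csInf_eq_min']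

lemma max'_image_neg (s : Finset ℝ) (hs : s.Nonempty) :
    (s.image Neg.neg).max' (hs.image _) = -s.min' hs :=
  le_antisymm (Finset.max'_le _ _ _ fun _ ha => by
      obtain ⟨b, hb, rfl⟩ := Finset.mem_image.1 ha
      exact neg_le_neg (Finset.min'_le _ _ hb))
    (Finset.le_max' _ _ (Finset.mem_image_of_mem _ (Finset.min'_mem _ _)))

lemma topHeight_image_eq_max' {e : ℤ → ℝ} (he : Function.Injective e) (p q : Lamp ℤ) :
    topHeight (e p.2) (e q.2) (p.1.image e ∆ q.1.image e) =
      ((lampCell p q).image e).max' ((lampCell_nonempty p q).image _) := by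
  simp only [topHeight, lampCell, Finset.image_insert, Finset.image_symmDiff _ _ he]

def rightTree (p : Lamp ℤ) : LampTree := ray (p.1.image (↑)) p.2

def leftTree (p : Lamp ℤ) : LampTree := ray (p.1.image fun a : ℤ => -(a : ℝ)) (-p.2)

lemma dist_rightTree_add_dist_leftTree (p q : Lamp ℤ) :
    dist (rightTree p) (rightTree q) + dist (leftTree p) (leftTree q) =
      2 * TSCP (fun a b : ℤ => dist a b) p q := by
  have hneg : Function.Injective fun a : ℤ => -(a : ℝ) := fun a b h => by simpa using h
  have hmin : ((lampCell p q).image fun a : ℤ => -(a : ℝ)).max' ((lampCell_nonempty p q).image _)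
      = -((lampCell p q).image ((↑) : ℤ → ℝ)).min' ((lampCell_nonempty p q).image _) := by
    simp only [← max'_image_neg, Finset.image_image]
    rfl
  rw [rightTree, rightTree, leftTree, leftTree, dist_ray, dist_ray,
    topHeight_image_eq_max' Int.cast_injective, topHeight_image_eq_max' hneg, hmin, TSCP_int_eq_max'_sub_min']
  ring

/-- Any injection of the configurations into `(0, 1]` would do. -/
def code (A : Finset ℤ) : ℝ := ((Encodable.encode A : ℝ) + 1)⁻¹

lemma code_injective : Function.Injective code := fun A B h => by
  simpa [code] using h

lemma code_mem_Ioc (A : Finset ℤ) : code A ∈ Ioc 0 1 :=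
  ⟨inv_pos.2 (by positivity), inv_le_one_of_one_le₀ (by simp)⟩

lemma abs_code_sub_code_le_one (A B : Finset ℤ) : |code A - code B| ≤ 1 := by
  have hA := code_mem_Ioc A
  have hB := code_mem_Ioc B
  rw [abs_le]
  constructor <;> linarith [hA.1, hA.2, hB.1, hB.2]

lemma dist_ray_singleton {a b σ : ℝ} (hσ : 0 < σ) (hab : a ≠ b) :
    dist (ray {a} (a - σ)) (ray {b} (b - σ)) = 2 * σ + |a - b| := by
  have htop : topHeight (a - σ) (b - σ) ({a} ∆ {b}) = max a b := by
    have hD : ({a} ∆ {b} : Finset ℝ) = {a, b} := by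
      ext
      grind [Finset.mem_symmDiff]
    refine le_antisymm (topHeight_le_iff.2 ⟨by linarith [le_max_left a b],
      by linarith [le_max_right a b], by simp [hD]⟩) (max_le ?_ ?_)
    · exact (le_topHeight _ _ _).2.2 a (by simp [hD])
    · exact (le_topHeight _ _ _).2.2 b (by simp [hD])
  rw [dist_ray, htop]
  rcases le_total a b with h | h
  · rw [max_eq_right h, abs_of_nonpos (by linarith)]; ring
  · rw [max_eq_left h, abs_of_nonneg (by linarith)]; ring

def markerTree (σ : ℝ) (p : Lamp ℤ) : LampTree := ray {code p.1} (code p.1 - σ)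

lemma dist_markerTree_bounds {σ : ℝ} (hσ : 1 ≤ σ) (p q : Lamp ℤ) :
    2 * σ * rho p q ≤ dist (markerTree σ p) (markerTree σ q) ∧
      dist (markerTree σ p) (markerTree σ q) ≤ 3 * σ * rho p q := by
  by_cases h : p.1 = q.1
  · simp [rho, h, markerTree]
  · rw [markerTree, markerTree, dist_ray_singleton (by linarith) (code_injective.ne h), rho,
      if_neg h]
    constructor <;> linarith [abs_nonneg (code p.1 - code q.1), abs_code_sub_code_le_one p.1 q.1]

def lampEmbedding (σ : ℝ) (p : Lamp ℤ) : LampTree × LampTree × LampTree :=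
  (markerTree σ p, rightTree p, leftTree p)

lemma lampEmbedding_injective (σ : ℝ) : Function.Injective (lampEmbedding σ) := by
  intro p q h
  have hcode : code p.1 - σ = code q.1 - σ := congrArg (fun e => e.1.height) h
  have hpos : (p.2 : ℝ) = q.2 := congrArg (fun e => e.2.1.height) h
  exact Prod.ext (code_injective (by linarith)) (by exact_mod_cast hpos)

lemma TSCP_add_mul_rho_nonneg {σ : ℝ} (hσ : 0 ≤ σ) (p q : Lamp ℤ) :
    0 ≤ TSCP (fun a b : ℤ => dist a b) p q + σ * rho p q :=
  add_nonneg ENNReal.toReal_nonneg (mul_nonneg hσ (by unfold rho; split_ifs <;> norm_num))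

lemma dist_lampEmbedding_bounds {σ : ℝ} (hσ : 1 ≤ σ) (p q : Lamp ℤ) :
    let d := TSCP (fun a b : ℤ => dist a b) p q + σ * rho p q
    let u := lampEmbedding σ p
    let v := lampEmbedding σ q
    2 * d ≤ dist u.1 v.1 + dist u.2.1 v.2.1 + dist u.2.2 v.2.2 ∧
      dist u.1 v.1 + dist u.2.1 v.2.1 + dist u.2.2 v.2.2 ≤ 3 * d := by
  have hsum := dist_rightTree_add_dist_leftTree p q
  have hmark := dist_markerTree_bounds hσ p q
  have hTSCP : 0 ≤ TSCP (fun a b : ℤ => dist a b) p q := ENNReal.toReal_nonneg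
  simp only [lampEmbedding]
  constructor <;> linarith

end Embedding

/-- There exist three ℝ-trees `T₁, T₂, T₃` such that for every `σ ≥ 1`,
`(La(ℤ), TSCP + σρ)` admits a 6-biLipschitz embedding into the ℓ1-product
`T₁ ⊕₁ T₂ ⊕₁ T₃` and an 18-biLipschitz embedding into the ℓ∞-product
`T₁ ⊕_∞ T₂ ⊕_∞ T₃`. -/
theorem statement6 :
    ∃ (T₁ T₂ T₃ : Type) (I₁ : MetricSpace T₁) (I₂ : MetricSpace T₂) (I₃ : MetricSpace T₃),
      letI := I₁
      letI := I₂
      letI := I₃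
      IsRTree T₁ ∧ IsRTree T₂ ∧ IsRTree T₃ ∧
      ∀ σ : ℝ, 1 ≤ σ →
        (∃ f : Lamp ℤ → T₁ × T₂ × T₃,
          BiLipWith (fun p q : Lamp ℤ => TSCP (fun a b : ℤ => dist a b) p q + σ * rho p q)
            (fun u v => dist u.1 v.1 + dist u.2.1 v.2.1 + dist u.2.2 v.2.2) 6 f) ∧
        (∃ g : Lamp ℤ → T₁ × T₂ × T₃,
          BiLipWith (fun p q : Lamp ℤ => TSCP (fun a b : ℤ => dist a b) p q + σ * rho p q)
            (fun u v => max (dist u.1 v.1) (max (dist u.2.1 v.2.1) (dist u.2.2 v.2.2))) 18 g) := by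
  refine ⟨LampTree, LampTree, LampTree, inferInstance, inferInstance, inferInstance,
    LampTree.isRTree, LampTree.isRTree, LampTree.isRTree, fun σ hσ => ?_⟩
  have hd := TSCP_add_mul_rho_nonneg (by linarith : 0 ≤ σ)
  have hbounds := dist_lampEmbedding_bounds hσ
  refine ⟨⟨lampEmbedding σ, biLipWith_of_bounds (lampEmbedding_injective σ) two_pos
    (b := 3) (by norm_num) hd hbounds⟩, ⟨lampEmbedding σ, biLipWith_of_bounds
    (lampEmbedding_injective σ) (by norm_num : (0 : ℝ) < 2 / 3) (b := 3) (by norm_num) hd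
    fun p q => ?_⟩⟩
  obtain ⟨hlow, hup⟩ := hbounds p q
  set u := lampEmbedding σ p
  set v := lampEmbedding σ q
  obtain ⟨hmax, hmax'⟩ := max_max_mem_Icc (dist_nonneg (x := u.1) (y := v.1))
    (dist_nonneg (x := u.2.1) (y := v.2.1)) (dist_nonneg (x := u.2.2) (y := v.2.2))
  constructor <;> linarith

end Lamplighter
end
end

section
/- Let (X,d) be a finite metric space and m ∈ ℕ. Then c_1^{m,dom}(X,d) < ∞ if and only if X admits a biLipschitz embedding into ℓ1^m. Quantitatively, c_{ℓ1^m}(X,d) ≤ c_1^{m,dom}(X,d) ≤ m·c_{ℓ1^m}(X,d). Moreover, for each p ≥ 1, c_{ℓp^m}(X,d) ≤ c_1^{m,dom}(X,d) ≤ m^{2−1/p}·c_{ℓp^m}(X,d). -/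
open Metric Set
open scoped Classical ENNReal NNReal

noncomputable section

namespace Lamplighter

variable {X Y Z : Type*}

/-!
Placing the dominated lines `φ i` on the coordinate axes of `ℓp^m`, scaled by `α i ^ (1/p)`,
keeps them `1`-Lipschitz, and the power mean inequality bounds the resulting `ℓp` distance below
by the weighted average `∑ i, α i * |φ i x - φ i y|`; this gives `c_{ℓp^m} ≤ c_1^{m,dom}`.

Conversely, the rescaled coordinates of a `C`-embedding into `ℓp^m` are `1`-Lipschitz lines whose
uniform average dominates `d / (m C)`, because the `ℓp` norm is at most the `ℓ1` norm. They need
not be injective, but replacing each `ψ` by `(ψ + δ φ₀) / (1 + δ)`, for a fixed injective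
`1`-Lipschitz line `φ₀` (which exists as `X` is finite), makes all of them injective for all but
finitely many `δ`, at a cost in the constant that vanishes as `δ → 0`. Hence
`c_1^{m,dom} ≤ m c_{ℓp^m} ≤ m^{2-1/p} c_{ℓp^m}`. Both sides of the equivalence always hold: the
diagonal copy of `φ₀` embeds `X` into `ℓ1^m`.
-/

section FiniteLines

variable {X : Type*} [MetricSpace X]

lemma exists_le_mul_of_pos_imp_pos {α : Type*} [Fintype α] (u v : α → ℝ) (hv : ∀ a, 0 ≤ v a)
    (huv : ∀ a, 0 < u a → 0 < v a) : ∃ C > 0, ∀ a, u a ≤ C * v a := by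
  refine ⟨1 + ∑ a, |u a / v a|, by positivity, fun a => ?_⟩
  rcases le_or_gt (u a) 0 with hu | hu
  · exact hu.trans (mul_nonneg (by positivity) (hv a))
  · have hratio : u a / v a ≤ 1 + ∑ b, |u b / v b| :=
      calc u a / v a ≤ |u a / v a| := le_abs_self _
        _ ≤ ∑ b, |u b / v b| := Finset.single_le_sum (f := fun b => |u b / v b|)
            (fun b _ => abs_nonneg _) (Finset.mem_univ a)
        _ ≤ 1 + ∑ b, |u b / v b| := by linarith
    exact (div_le_iff₀ (huv a hu)).1 hratio

lemma exists_injective_lipschitz_line [Fintype X] :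
    ∃ φ : X → ℝ, Function.Injective φ ∧ (∀ x y, |φ x - φ y| ≤ dist x y) ∧
      ∃ C > 0, ∀ x y, dist x y ≤ C * |φ x - φ y| := by
  set h : X → ℝ := fun x => (Fintype.equivFin X x : ℕ)
  have hinj : Function.Injective h := fun a b hab =>
    (Fintype.equivFin X).injective (Fin.ext (Nat.cast_injective hab))
  obtain ⟨c, hc, hhc⟩ := exists_le_mul_of_pos_imp_pos (fun q : X × X => |h q.1 - h q.2|)
    (fun q => dist q.1 q.2) (fun q => dist_nonneg) fun q hq =>
      dist_pos.2 fun he => by simp [he] at hq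
  set φ : X → ℝ := fun x => h x / c
  have hφinj : Function.Injective φ := fun a b hab => hinj ((div_left_inj' hc.ne').1 hab)
  obtain ⟨C, hC, hφC⟩ := exists_le_mul_of_pos_imp_pos (fun q : X × X => dist q.1 q.2)
    (fun q => |φ q.1 - φ q.2|) (fun q => abs_nonneg _) fun q hq =>
      abs_pos.2 (sub_ne_zero.2 fun he => (dist_pos.1 hq) (hφinj he))
  refine ⟨φ, hφinj, fun x y => ?_, C, hC, fun x y => hφC (x, y)⟩
  rw [← sub_div, abs_div, abs_of_pos hc, div_le_iff₀ hc, mul_comm]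
  exact hhc (x, y)

end FiniteLines

section LpDist

variable {m : ℕ} {p : ℝ}

lemma l1Dist_eq_lpDist_one (m : ℕ) : l1Dist m = lpDist m 1 := by
  funext x y
  simp [l1Dist, lpDist]

lemma sum_rpow_le_rpow_sum {ι : Type*} (s : Finset ι) {f : ι → ℝ} (hf : ∀ i ∈ s, 0 ≤ f i)
    (hp : 1 ≤ p) : ∑ i ∈ s, f i ^ p ≤ (∑ i ∈ s, f i) ^ p := by
  classical
  induction s using Finset.induction_on with
  | empty => simp [Real.zero_rpow (by linarith : p ≠ 0)]
  | insert a s ha ih =>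
    rw [Finset.sum_insert ha, Finset.sum_insert ha]
    have hs : ∀ i ∈ s, 0 ≤ f i := fun i hi => hf i (Finset.mem_insert_of_mem hi)
    exact (add_le_add_right (ih hs) _).trans <| Real.add_rpow_le_rpow_add
      (hf a (Finset.mem_insert_self a s)) (Finset.sum_nonneg hs) hp

lemma abs_sub_le_lpDist (hp : 0 < p) (x y : Fin m → ℝ) (i : Fin m) :
    |x i - y i| ≤ lpDist m p x y :=
  calc |x i - y i| = (|x i - y i| ^ p) ^ (1 / p) := by
        rw [one_div, Real.rpow_rpow_inv (abs_nonneg _) hp.ne']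
    _ ≤ lpDist m p x y := Real.rpow_le_rpow (by positivity)
        (Finset.single_le_sum (f := fun j => |x j - y j| ^ p) (fun j _ => by positivity)
          (Finset.mem_univ i)) (by positivity)

lemma lpDist_le_l1Dist (hp : 1 ≤ p) (x y : Fin m → ℝ) : lpDist m p x y ≤ l1Dist m x y :=
  calc lpDist m p x y ≤ ((∑ i, |x i - y i|) ^ p) ^ (1 / p) :=
        Real.rpow_le_rpow (by positivity)
          (sum_rpow_le_rpow_sum _ (fun i _ => abs_nonneg _) hp) (by positivity)
    _ = l1Dist m x y := by
        rw [one_div, Real.rpow_rpow_inv (by positivity) (by linarith), l1Dist]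

lemma lpDist_rpow_smul {α : Fin m → ℝ} (hα : ∀ i, 0 ≤ α i) (hp : p ≠ 0) (u v : Fin m → ℝ) :
    lpDist m p (fun i => α i ^ (1 / p) * u i) (fun i => α i ^ (1 / p) * v i) =
      (∑ i, α i * |u i - v i| ^ p) ^ (1 / p) := by
  refine congrArg (· ^ (1 / p)) (Finset.sum_congr rfl fun i _ => ?_)
  have hαp : 0 ≤ α i ^ (1 / p) := Real.rpow_nonneg (hα i) _
  rw [← mul_sub, abs_mul, abs_of_nonneg hαp, Real.mul_rpow hαp (abs_nonneg _),
    ← Real.rpow_mul (hα i), one_div_mul_cancel hp, Real.rpow_one]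

end LpDist

section Embeddings

variable {X : Type*} [MetricSpace X] {m : ℕ} {p : ℝ}

lemma cEmb_le_ofReal {Y Z : Type*} {dY : Y → Y → ℝ} {dZ : Z → Z → ℝ} {C : ℝ} (hC : 0 < C)
    {f : Y → Z} (hf : BiLipWith dY dZ C f) : cEmb dY dZ ≤ ENNReal.ofReal C :=
  sInf_le ⟨C, hC, rfl, f, hf⟩

lemma biLipWith_l1Dist_diagonal (hm : m ≠ 0) {φ : X → ℝ} (hinj : Function.Injective φ)
    (hlip : ∀ x y, |φ x - φ y| ≤ dist x y) {C : ℝ} (hC : 0 < C)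
    (hlow : ∀ x y, dist x y ≤ C * |φ x - φ y|) :
    BiLipWith dist (l1Dist m) C fun x (_ : Fin m) => φ x := by
  have hmR : (0 : ℝ) < m := by positivity
  refine ⟨fun a b hab => hinj (congrFun hab ⟨0, by omega⟩), m / C, by positivity, fun x y => ?_⟩
  have hl1 : l1Dist m (fun _ => φ x) (fun _ => φ y) = m * |φ x - φ y| := by simp [l1Dist]
  rw [hl1]
  constructor
  · calc m / C * dist x y ≤ m / C * (C * |φ x - φ y|) := by gcongr; exact hlow x y
      _ = m * |φ x - φ y| := by field_simp
  · calc m * |φ x - φ y| ≤ m * dist x y := by gcongr; exact hlip x y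
      _ = C * (m / C) * dist x y := by field_simp

lemma exists_biLipWith_l1Dist [Fintype X] (hm : m ≠ 0) :
    ∃ C > 0, ∃ f : X → Fin m → ℝ, BiLipWith dist (l1Dist m) C f := by
  obtain ⟨φ, hinj, hlip, C, hC, hlow⟩ := exists_injective_lipschitz_line (X := X)
  exact ⟨C, hC, _, biLipWith_l1Dist_diagonal hm hinj hlip hC hlow⟩

lemma biLipWith_lpDist_of_weighted (hp : 1 ≤ p) {C : ℝ} (hC : 0 < C) {φ : Fin m → X → ℝ}
    {α : Fin m → ℝ} (hinj : ∀ i, Function.Injective (φ i))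
    (hlip : ∀ i x y, |φ i x - φ i y| ≤ dist x y) (hα0 : ∀ i, 0 ≤ α i) (hα1 : ∑ i, α i = 1)
    (hlow : ∀ x y, dist x y / C ≤ ∑ i, α i * |φ i x - φ i y|) :
    BiLipWith dist (lpDist m p) C fun x i => α i ^ (1 / p) * φ i x := by
  have hp0 : p ≠ 0 := by linarith
  refine ⟨fun x y hxy => ?_, 1 / C, by positivity, fun x y => ?_⟩
  · obtain ⟨i, -, hi⟩ := Finset.exists_ne_zero_of_sum_ne_zero (hα1.trans_ne one_ne_zero)
    have hαi : α i ^ (1 / p) ≠ 0 := (Real.rpow_pos_of_pos ((hα0 i).lt_of_ne' hi) _).ne'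
    exact hinj i (mul_left_cancel₀ hαi (congrFun hxy i))
  rw [lpDist_rpow_smul hα0 hp0]
  constructor
  · calc 1 / C * dist x y = dist x y / C := by ring
      _ ≤ ∑ i, α i * |φ i x - φ i y| := hlow x y
      _ ≤ (∑ i, α i * |φ i x - φ i y| ^ p) ^ (1 / p) :=
          Real.arith_mean_le_rpow_mean _ _ _ (fun i _ => hα0 i) hα1
            (fun i _ => abs_nonneg _) hp
  · calc (∑ i, α i * |φ i x - φ i y| ^ p) ^ (1 / p) ≤ (∑ i, α i * dist x y ^ p) ^ (1 / p) := by
          gcongr with i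
          · exact Finset.sum_nonneg fun i _ => mul_nonneg (hα0 i) (by positivity)
          · exact hα0 i
          · exact hlip i x y
      _ = C * (1 / C) * dist x y := by
          rw [← Finset.sum_mul, hα1, one_mul, one_div, Real.rpow_rpow_inv dist_nonneg hp0]
          field_simp

lemma cEmb_lpDist_le_c1dom (hp : 1 ≤ p) :
    cEmb (dist : X → X → ℝ) (lpDist m p) ≤ c1dom (dist : X → X → ℝ) m :=
  sInf_le_sInf fun _ ⟨C, hC, hD, _, _, hinj, hlip, hα0, hα1, hlow⟩ =>
    ⟨C, hC, hD, _, biLipWith_lpDist_of_weighted hp hC hinj hlip hα0 hα1 hlow⟩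

end Embeddings

section Perturbation

open Filter Topology

variable {X : Type*} {ψ φ₀ : X → ℝ} {δ : ℝ}

def perturbLine (ψ φ₀ : X → ℝ) (δ : ℝ) (x : X) : ℝ := (ψ x + δ * φ₀ x) / (1 + δ)

lemma one_add_mul_abs_perturbLine_sub (hδ : 0 ≤ δ) (x y : X) :
    (1 + δ) * |perturbLine ψ φ₀ δ x - perturbLine ψ φ₀ δ y| =
      |ψ x - ψ y + δ * (φ₀ x - φ₀ y)| := by
  have hδ1 : 0 < 1 + δ := by linarith
  rw [perturbLine, perturbLine, ← sub_div, abs_div, abs_of_pos hδ1, mul_div_cancel₀ _ hδ1.ne']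
  ring_nf

lemma abs_perturbLine_sub_le [MetricSpace X] (hψ : ∀ x y, |ψ x - ψ y| ≤ dist x y)
    (hφ₀ : ∀ x y, |φ₀ x - φ₀ y| ≤ dist x y) (hδ : 0 ≤ δ) (x y : X) :
    |perturbLine ψ φ₀ δ x - perturbLine ψ φ₀ δ y| ≤ dist x y := by
  refine le_of_mul_le_mul_left ?_ (by linarith : 0 < 1 + δ)
  rw [one_add_mul_abs_perturbLine_sub hδ]
  calc |ψ x - ψ y + δ * (φ₀ x - φ₀ y)| ≤ |ψ x - ψ y| + δ * |φ₀ x - φ₀ y| := by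
        simpa [abs_mul, abs_of_nonneg hδ] using abs_add_le (ψ x - ψ y) (δ * (φ₀ x - φ₀ y))
    _ ≤ (1 + δ) * dist x y := by nlinarith [hψ x y, hφ₀ x y]

lemma abs_sub_le_perturbLine [MetricSpace X] (hφ₀ : ∀ x y, |φ₀ x - φ₀ y| ≤ dist x y)
    (hδ : 0 ≤ δ) (x y : X) :
    |ψ x - ψ y| ≤ (1 + δ) * |perturbLine ψ φ₀ δ x - perturbLine ψ φ₀ δ y| + δ * dist x y := by
  rw [one_add_mul_abs_perturbLine_sub hδ]
  calc |ψ x - ψ y| ≤ |ψ x - ψ y + δ * (φ₀ x - φ₀ y)| + |δ * (φ₀ x - φ₀ y)| := by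
        simpa using abs_sub (ψ x - ψ y + δ * (φ₀ x - φ₀ y)) (δ * (φ₀ x - φ₀ y))
    _ ≤ |ψ x - ψ y + δ * (φ₀ x - φ₀ y)| + δ * dist x y := by
        rw [abs_mul, abs_of_nonneg hδ]
        gcongr
        exact hφ₀ x y

lemma finite_setOf_not_injective_perturbLine [Finite X] (hφ₀ : Function.Injective φ₀) :
    {δ | ¬ Function.Injective (perturbLine ψ φ₀ δ)}.Finite := by
  -- apart from `δ = -1`, a collision `a ≠ b` forces `δ = (ψ b - ψ a) / (φ₀ a - φ₀ b)`
  refine ((Set.finite_range fun q : X × X => (ψ q.2 - ψ q.1) / (φ₀ q.1 - φ₀ q.2)).insert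
    (-1)).subset fun δ hδ => ?_
  rcases eq_or_ne δ (-1) with h | h
  · exact Or.inl h
  obtain ⟨a, b, hab, hne⟩ := Function.not_injective_iff.1 hδ
  have hδ1 : 1 + δ ≠ 0 := fun h' => h (by linarith)
  have hφ₀ab : φ₀ a - φ₀ b ≠ 0 := sub_ne_zero.2 (hφ₀.ne hne)
  rw [perturbLine, perturbLine, div_left_inj' hδ1] at hab
  exact Or.inr ⟨(a, b), by field_simp; linarith⟩

lemma exists_injective_lipschitz_sum_le [MetricSpace X] [Fintype X] {ι : Type*} [Fintype ι]
    {ψ : ι → X → ℝ} (hψ : ∀ i x y, |ψ i x - ψ i y| ≤ dist x y) (hφ₀inj : Function.Injective φ₀)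
    (hφ₀ : ∀ x y, |φ₀ x - φ₀ y| ≤ dist x y) {A B : ℝ} (hA : 0 ≤ A) (hAB : A < B)
    (hlow : ∀ x y, dist x y ≤ A * ∑ i, |ψ i x - ψ i y|) :
    ∃ φ : ι → X → ℝ, (∀ i, Function.Injective (φ i)) ∧ (∀ i x y, |φ i x - φ i y| ≤ dist x y) ∧
      ∀ x y, dist x y ≤ B * ∑ i, |φ i x - φ i y| := by
  set k : ℝ := (Fintype.card ι : ℝ)
  have hsmall : ∀ᶠ δ in 𝓝 0, A * (1 + δ) < B * (1 - A * k * δ) :=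
    ContinuousAt.eventually_lt (by fun_prop) (by fun_prop) (by simpa using hAB)
  have hinj : ∀ᶠ δ in 𝓝[>] 0, ∀ i, Function.Injective (perturbLine (ψ i) φ₀ δ) :=
    eventually_all.2 fun i => by
      have := (finite_setOf_not_injective_perturbLine (ψ := ψ i) hφ₀inj).eventually_cofinite_notMem
      have hsub : Set.Ioi (0 : ℝ) ⊆ {0}ᶜ := fun _ hδ => ne_of_gt hδ
      simpa using (this.filter_mono (nhdsNE_le_cofinite 0)).filter_mono (nhdsWithin_mono 0 hsub)
  obtain ⟨δ, hδ0 : 0 < δ, hδsmall, hδinj⟩ :=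
    (eventually_mem_nhdsWithin.and ((hsmall.filter_mono nhdsWithin_le_nhds).and hinj)).exists
  refine ⟨fun i => perturbLine (ψ i) φ₀ δ, hδinj,
    fun i => abs_perturbLine_sub_le (hψ i) hφ₀ hδ0.le, fun x y => ?_⟩
  set S := ∑ i, |perturbLine (ψ i) φ₀ δ x - perturbLine (ψ i) φ₀ δ y|
  have hS : 0 ≤ S := by positivity
  have hsum : ∑ i, |ψ i x - ψ i y| ≤ (1 + δ) * S + k * δ * dist x y :=
    calc ∑ i, |ψ i x - ψ i y|
        ≤ ∑ i, ((1 + δ) * |perturbLine (ψ i) φ₀ δ x - perturbLine (ψ i) φ₀ δ y|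
          + δ * dist x y) := Finset.sum_le_sum fun i _ => abs_sub_le_perturbLine hφ₀ hδ0.le x y
      _ = (1 + δ) * S + k * δ * dist x y := by
        rw [Finset.sum_add_distrib, ← Finset.mul_sum, Finset.sum_const, Finset.card_univ,
          nsmul_eq_mul]
        ring
  have hpos : 0 < 1 - A * k * δ := by
    by_contra! h
    have hB : 0 < B := hA.trans_lt hAB
    nlinarith [mul_nonneg hA (by linarith : (0 : ℝ) ≤ 1 + δ),
      mul_nonpos_of_nonneg_of_nonpos hB.le h]
  have hmain : (1 - A * k * δ) * dist x y ≤ (1 - A * k * δ) * (B * S) := by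
    nlinarith [hlow x y, mul_le_mul_of_nonneg_left hsum hA,
      mul_le_mul_of_nonneg_right hδsmall.le hS]
  exact le_of_mul_le_mul_left hmain hpos

end Perturbation

section DominatedDistortion

variable {X : Type*} [MetricSpace X] {m : ℕ} {p : ℝ}

lemma exists_lipschitz_coords_of_biLipWith (hp : 1 ≤ p) {C : ℝ} (hC : 0 < C)
    {f : X → Fin m → ℝ} (hf : BiLipWith dist (lpDist m p) C f) :
    ∃ ψ : Fin m → X → ℝ, (∀ i x y, |ψ i x - ψ i y| ≤ dist x y) ∧
      ∀ x y, dist x y ≤ C * ∑ i, |ψ i x - ψ i y| := by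
  obtain ⟨-, s, hs, hf⟩ := hf
  have hψ : ∀ i x y, |f x i / (C * s) - f y i / (C * s)| = |f x i - f y i| / (C * s) := by
    intro i x y
    rw [← sub_div, abs_div, abs_of_pos (mul_pos hC hs)]
  refine ⟨fun i x => f x i / (C * s), fun i x y => ?_, fun x y => ?_⟩
  · rw [hψ, div_le_iff₀ (by positivity), mul_comm]
    exact (abs_sub_le_lpDist (by linarith) _ _ i).trans (hf x y).2
  · simp only [hψ, ← Finset.sum_div]
    rw [← mul_div_assoc, mul_div_mul_left _ _ hC.ne', le_div_iff₀ hs, mul_comm]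
    exact (hf x y).1.trans (lpDist_le_l1Dist hp _ _)

lemma c1dom_le_of_sum_le (hm : m ≠ 0) {B : ℝ} (hB : 0 < B) {φ : Fin m → X → ℝ}
    (hinj : ∀ i, Function.Injective (φ i)) (hlip : ∀ i x y, |φ i x - φ i y| ≤ dist x y)
    (hlow : ∀ x y, dist x y ≤ B * ∑ i, |φ i x - φ i y|) :
    c1dom (dist : X → X → ℝ) m ≤ ENNReal.ofReal (m * B) := by
  refine sInf_le ⟨m * B, by positivity, rfl, φ, fun _ => 1 / m, hinj, hlip,
    fun _ => by positivity, by simp [hm], fun x y => ?_⟩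
  rw [← Finset.mul_sum, div_le_iff₀ (by positivity)]
  calc dist x y ≤ B * ∑ i, |φ i x - φ i y| := hlow x y
    _ = (1 / m * ∑ i, |φ i x - φ i y|) * (m * B) := by field_simp

lemma c1dom_le_of_biLipWith [Fintype X] (hp : 1 ≤ p) (hm : m ≠ 0) {C : ℝ} (hC : 0 < C)
    {f : X → Fin m → ℝ} (hf : BiLipWith dist (lpDist m p) C f) :
    c1dom (dist : X → X → ℝ) m ≤ ENNReal.ofReal (m * C) := by
  obtain ⟨ψ, hψ, hψlow⟩ := exists_lipschitz_coords_of_biLipWith hp hC hf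
  obtain ⟨φ₀, hφ₀inj, hφ₀, -⟩ := exists_injective_lipschitz_line (X := X)
  refine ENNReal.le_of_forall_pos_le_add fun ε hε _ => ?_
  have hmR : (0 : ℝ) < m := by positivity
  obtain ⟨φ, hinj, hlip, hlow⟩ := exists_injective_lipschitz_sum_le hψ hφ₀inj hφ₀ hC.le
    (lt_add_of_pos_right C (div_pos (NNReal.coe_pos.2 hε) hmR)) hψlow
  calc c1dom (dist : X → X → ℝ) m ≤ ENNReal.ofReal (m * (C + ε / m)) :=
        c1dom_le_of_sum_le hm (by positivity) hinj hlip hlow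
    _ = ENNReal.ofReal (m * C) + ε := by
        rw [mul_add, mul_div_cancel₀ _ hmR.ne', ENNReal.ofReal_add (by positivity) ε.coe_nonneg,
          ENNReal.ofReal_coe_nnreal]

lemma c1dom_le_natCast_mul_cEmb [Fintype X] (hp : 1 ≤ p) (hm : m ≠ 0) :
    c1dom (dist : X → X → ℝ) m ≤ m * cEmb (dist : X → X → ℝ) (lpDist m p) := by
  rw [cEmb, sInf_eq_iInf]
  simp_rw [ENNReal.mul_iInf_of_ne (Nat.cast_ne_zero.2 hm) (ENNReal.natCast_ne_top m)]
  refine le_iInf₂ ?_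
  rintro _ ⟨C, hC, rfl, f, hf⟩
  rw [← ENNReal.ofReal_natCast, ← ENNReal.ofReal_mul (Nat.cast_nonneg m)]
  exact c1dom_le_of_biLipWith hp hm hC hf

end DominatedDistortion

/-- For a finite metric space `X` and `m ∈ ℕ`: `c_1^{m,dom}(X,d) < ∞`
iff `X` biLipschitz embeds into `ℓ1^m`; quantitatively
`c_{ℓ1^m}(X) ≤ c_1^{m,dom}(X) ≤ m · c_{ℓ1^m}(X)`, and for every `p ≥ 1`,
`c_{ℓp^m}(X) ≤ c_1^{m,dom}(X) ≤ m^{2-1/p} · c_{ℓp^m}(X)`. -/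
theorem statement10 (X : Type u) [MetricSpace X] [Fintype X] (m : ℕ) (hm : 1 ≤ m) :
    (c1dom (dist : X → X → ℝ) m ≠ ⊤ ↔
      ∃ (C : ℝ) (f : X → Fin m → ℝ), BiLipWith (dist : X → X → ℝ) (l1Dist m) C f) ∧
    cEmb (dist : X → X → ℝ) (l1Dist m) ≤ c1dom (dist : X → X → ℝ) m ∧
    c1dom (dist : X → X → ℝ) m ≤ (m : ℝ≥0∞) * cEmb (dist : X → X → ℝ) (l1Dist m) ∧
    ∀ p : ℝ, 1 ≤ p →
      cEmb (dist : X → X → ℝ) (lpDist m p) ≤ c1dom (dist : X → X → ℝ) m ∧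
      c1dom (dist : X → X → ℝ) m ≤
        ENNReal.ofReal ((m : ℝ) ^ ((2 : ℝ) - 1 / p)) *
          cEmb (dist : X → X → ℝ) (lpDist m p) := by
  have hm0 : m ≠ 0 := by omega
  obtain ⟨C, hC, f, hf⟩ := exists_biLipWith_l1Dist (X := X) hm0
  have hl1 : c1dom (dist : X → X → ℝ) m ≤ m * cEmb (dist : X → X → ℝ) (l1Dist m) :=
    l1Dist_eq_lpDist_one m ▸ c1dom_le_natCast_mul_cEmb le_rfl hm0
  have hfin : c1dom (dist : X → X → ℝ) m ≠ ⊤ := ne_top_of_le_ne_top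
    (ENNReal.mul_ne_top (ENNReal.natCast_ne_top m)
      (ne_top_of_le_ne_top ENNReal.ofReal_ne_top (cEmb_le_ofReal hC hf))) hl1
  refine ⟨⟨fun _ => ⟨C, f, hf⟩, fun _ => hfin⟩,
    l1Dist_eq_lpDist_one m ▸ cEmb_lpDist_le_c1dom le_rfl, hl1,
    fun p hp => ⟨cEmb_lpDist_le_c1dom hp, (c1dom_le_natCast_mul_cEmb hp hm0).trans ?_⟩⟩
  gcongr
  rw [← ENNReal.ofReal_natCast]
  refine ENNReal.ofReal_le_ofReal (Real.self_le_rpow_of_one_le (by exact_mod_cast hm) ?_)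
  have : 1 / p ≤ 1 := (div_le_one (by linarith)).2 hp
  linarith

end Lamplighter
end
end
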